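/- arXiv:2501.15869 — 8 statements merged into one kernel-verified Lean document; each statement's English description precedes it below -/
import Mathlib

section
/- Let q be a real number with 0 < q < 1, let f(n) = ∑_{k=0}^d c_k n^k be a polynomial in n with rational coefficients c_k, and let a_n(q) be defined by the recurrence a_0(q) = 1 and a_n(q) = f(n) + (1 - q^{n-1}) a_{n-1}(q) for n ≥ 1. Then lim_{n→∞} ( ∑_{i=1}^n f(i) - a_n(q) ) = ∑_{n=1}^∞ (∑_{i=1}^n f(i)) q^n ∏_{j=n+1}^∞ (1 - q^j). -/
/-!
The error `e n = S n - a n`, where `S n = f 1 + ⋯ + f n`, satisfies the linear recurrence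
`e (n + 1) = (1 - q ^ n) * e n + q ^ n * S n`. Variation of constants writes `e n` as
`e 0 * ∏_{j < n} (1 - q ^ j) + ∑_{m < n} q ^ m * S m * ∏_{m < j < n} (1 - q ^ j)`; the first term
vanishes for `n ≥ 1` because of the factor `1 - q ^ 0`, and Tannery's theorem passes to the limit
in the sum, the products lying in `[0, 1]` and `q ^ m * |S m|` being summable since `S` grows
polynomially.
-/

open Filter Finset Topology

theorem eq_mul_prod_add_sum_of_succ_eq {R : Type*} [CommSemiring R] {e u b : ℕ → R}
    (he : ∀ n, e (n + 1) = u n * e n + b n) (n : ℕ) :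
    e n = e 0 * ∏ j ∈ range n, u j + ∑ m ∈ range n, b m * ∏ j ∈ Ico (m + 1) n, u j := by
  induction n with
  | zero => simp
  | succ n ih =>
    have hprod : ∀ m ∈ range n,
        b m * ∏ j ∈ Ico (m + 1) (n + 1), u j = b m * (∏ j ∈ Ico (m + 1) n, u j) * u n :=
      fun m hm => by rw [prod_Ico_succ_top (by simpa using hm), mul_assoc]
    rw [prod_range_succ, sum_range_succ, sum_congr rfl hprod, ← sum_mul, Ico_self, prod_empty,
      he, ih]
    ring

section NormedRing

variable {R : Type*} [NormedCommRing R] [NormOneClass R]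

theorem norm_prod_le_one {ι : Type*} (s : Finset ι) {v : ι → R} (hv : ∀ j, ‖v j‖ ≤ 1) :
    ‖∏ j ∈ s, v j‖ ≤ 1 :=
  (norm_prod_le s v).trans (prod_le_one (fun _ _ => norm_nonneg _) fun j _ => hv j)

theorem Multipliable.norm_tprod_le_one {ι : Type*} {v : ι → R} (hmul : Multipliable v)
    (hv : ∀ j, ‖v j‖ ≤ 1) : ‖∏' j, v j‖ ≤ 1 :=
  le_of_tendsto' (tendsto_norm.comp hmul.hasProd) fun s => norm_prod_le_one s hv

variable [CompleteSpace R] {u b : ℕ → R}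

theorem summable_mul_tprod (hu : ∀ j, ‖u j‖ ≤ 1) (hmul : ∀ m, Multipliable fun j => u (m + j))
    (hb : Summable fun m => ‖b m‖) : Summable fun m => b m * ∏' j, u (m + 1 + j) :=
  hb.of_norm_bounded fun m =>
    (norm_mul_le _ _).trans (mul_le_of_le_one_right (norm_nonneg _)
      ((hmul (m + 1)).norm_tprod_le_one fun _ => hu _))

theorem tendsto_sum_mul_prod_Ico (hu : ∀ j, ‖u j‖ ≤ 1)
    (hmul : ∀ m, Multipliable fun j => u (m + j)) (hb : Summable fun m => ‖b m‖) :
    Tendsto (fun n => ∑ m ∈ range n, b m * ∏ j ∈ Ico (m + 1) n, u j) atTop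
      (𝓝 (∑' m, b m * ∏' j, u (m + 1 + j))) := by
  refine (tendsto_tsum_of_dominated_convergence (bound := fun m => ‖b m‖)
    (f := fun n => Set.indicator ↑(range n) fun m => b m * ∏ j ∈ Ico (m + 1) n, u j)
    hb (fun m => ?_) (.of_forall fun n m => ?_)).congr fun n => (sum_eq_tsum_indicator _ _).symm
  · have hprod : Tendsto (fun n => ∏ j ∈ Ico (m + 1) n, u j) atTop (𝓝 (∏' j, u (m + 1 + j))) :=
      ((hmul (m + 1)).hasProd.tendsto_prod_nat.comp (tendsto_sub_atTop_nat (m + 1))).congr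
        fun n => (prod_Ico_eq_prod_range _ _ _).symm
    refine (hprod.const_mul (b m)).congr' ?_
    filter_upwards [eventually_gt_atTop m] with n hn
    simp [hn]
  · exact (norm_indicator_le_norm_self _ _).trans <| (norm_mul_le _ _).trans <|
      mul_le_of_le_one_right (norm_nonneg _) (norm_prod_le_one _ hu)

theorem tendsto_of_succ_eq_mul_add {e : ℕ → R} (hu : ∀ j, ‖u j‖ ≤ 1)
    (hmul : ∀ m, Multipliable fun j => u (m + j)) (hb : Summable fun m => ‖b m‖)
    (he : ∀ n, e (n + 1) = u n * e n + b n) :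
    Tendsto e atTop (𝓝 (e 0 * ∏' j, u j + ∑' m, b m * ∏' j, u (m + 1 + j))) := by
  have hprod := (hmul 0).hasProd.tendsto_prod_nat
  simp only [zero_add] at hprod
  exact ((hprod.const_mul (e 0)).add (tendsto_sum_mul_prod_Ico hu hmul hb)).congr
    fun n => (eq_mul_prod_add_sum_of_succ_eq he n).symm

end NormedRing

theorem multipliable_one_sub_pow_add {q : ℝ} (hq0 : 0 ≤ q) (hq1 : q < 1) (m : ℕ) :
    Multipliable fun j => 1 - q ^ (m + j) := by
  simpa [pow_add, sub_eq_add_neg] using Real.multipliable_one_add_of_summable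
    ((summable_geometric_of_lt_one hq0 hq1).mul_left (q ^ m)).neg

theorem abs_sum_Icc_le_of_eq_poly {f c : ℕ → ℝ} {d : ℕ}
    (hf : ∀ n : ℕ, f n = ∑ k ∈ range (d + 1), c k * (n : ℝ) ^ k) (m : ℕ) :
    |∑ i ∈ Icc 1 m, f i| ≤ (∑ k ∈ range (d + 1), |c k|) * (m : ℝ) ^ (d + 1) := by
  have hfi : ∀ i ∈ Icc 1 m, |f i| ≤ (∑ k ∈ range (d + 1), |c k|) * (m : ℝ) ^ d := by
    intro i hi
    obtain ⟨hi1, him⟩ := mem_Icc.1 hi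
    rw [hf, sum_mul]
    refine (abs_sum_le_sum_abs _ _).trans (sum_le_sum fun k hk => ?_)
    rw [abs_mul, abs_of_nonneg (by positivity : (0 : ℝ) ≤ (i : ℝ) ^ k)]
    refine mul_le_mul_of_nonneg_left ?_ (abs_nonneg _)
    calc (i : ℝ) ^ k ≤ (m : ℝ) ^ k := by gcongr
      _ ≤ (m : ℝ) ^ d :=
        pow_le_pow_right₀ (by exact_mod_cast hi1.trans him) (Nat.lt_succ_iff.1 (mem_range.1 hk))
  calc |∑ i ∈ Icc 1 m, f i| ≤ ∑ i ∈ Icc 1 m, |f i| := abs_sum_le_sum_abs _ _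
    _ ≤ #(Icc 1 m) • ((∑ k ∈ range (d + 1), |c k|) * (m : ℝ) ^ d) := sum_le_card_nsmul _ _ _ hfi
    _ = (∑ k ∈ range (d + 1), |c k|) * (m : ℝ) ^ (d + 1) := by simp [nsmul_eq_mul]; ring

theorem summable_norm_pow_mul_sum_Icc_of_eq_poly {f c : ℕ → ℝ} {d : ℕ}
    (hf : ∀ n : ℕ, f n = ∑ k ∈ range (d + 1), c k * (n : ℝ) ^ k) {q : ℝ} (hq0 : 0 ≤ q)
    (hq1 : q < 1) : Summable fun m : ℕ => ‖q ^ m * ∑ i ∈ Icc 1 m, f i‖ := by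
  refine ((summable_pow_mul_geometric_of_norm_lt_one (d + 1)
    (by rwa [Real.norm_of_nonneg hq0])).mul_left (∑ k ∈ range (d + 1), |c k|)).of_nonneg_of_le
    (fun _ => norm_nonneg _) fun m => ?_
  rw [norm_mul, norm_pow, Real.norm_of_nonneg hq0, Real.norm_eq_abs, mul_comm, ← mul_assoc]
  exact mul_le_mul_of_nonneg_right (abs_sum_Icc_le_of_eq_poly hf m) (by positivity)

theorem andrews_crippa_simon_limit_general (q : ℝ) (hq0 : 0 < q) (hq1 : q < 1)
    (d : ℕ) (c : ℕ → ℚ) (f : ℕ → ℝ)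
    (hf : ∀ n : ℕ, f n = ∑ k ∈ Finset.range (d + 1), (c k : ℝ) * (n : ℝ) ^ k)
    (a : ℕ → ℝ)
    (ha : ∀ n : ℕ, a (n + 1) = f (n + 1) + (1 - q ^ n) * a n) :
    Filter.Tendsto (fun n : ℕ => (∑ i ∈ Finset.Icc 1 n, f i) - a n) Filter.atTop
      (nhds (∑' n : ℕ, (∑ i ∈ Finset.Icc 1 (n + 1), f i) * q ^ (n + 1) *
        ∏' j : ℕ, (1 - q ^ (n + 2 + j)))) := by
  set S : ℕ → ℝ := fun n => ∑ i ∈ Icc 1 n, f i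
  have hrec (n : ℕ) : S (n + 1) - a (n + 1) = (1 - q ^ n) * (S n - a n) + q ^ n * S n := by
    simp only [S, sum_Icc_succ_top (Nat.le_add_left 1 n), ha]
    ring
  have hu (j : ℕ) : ‖1 - q ^ j‖ ≤ 1 := by
    rw [Real.norm_of_nonneg (sub_nonneg.2 (pow_le_one₀ hq0.le hq1.le))]
    exact sub_le_self _ (pow_nonneg hq0.le j)
  have hmul := multipliable_one_sub_pow_add hq0.le hq1
  have hb := summable_norm_pow_mul_sum_Icc_of_eq_poly hf hq0.le hq1
  have hlim := tendsto_of_succ_eq_mul_add (e := fun n => S n - a n) hu hmul hb hrec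
  rw [tprod_of_exists_eq_zero ⟨0, by simp⟩, mul_zero, zero_add,
    (summable_mul_tprod hu hmul hb).tsum_eq_zero_add] at hlim
  convert hlim using 2
  simp [mul_comm]

/-- Let `0 < q < 1`, let `f(n) = ∑_{k=0}^d c_k n^k` be a polynomial with rational
coefficients, and let `a_n(q)` satisfy `a_0(q) = 1`,
`a_n(q) = f(n) + (1 - q^{n-1}) a_{n-1}(q)` for `n ≥ 1`. Then
`lim_{n→∞} (∑_{i=1}^n f(i) - a_n(q)) = ∑_{n=1}^∞ (∑_{i=1}^n f(i)) q^n (q^{n+1})_∞`. -/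
theorem andrews_crippa_simon_limit (q : ℝ) (hq0 : 0 < q) (hq1 : q < 1)
    (d : ℕ) (c : ℕ → ℚ) (f : ℕ → ℝ)
    (hf : ∀ n : ℕ, f n = ∑ k ∈ Finset.range (d + 1), (c k : ℝ) * (n : ℝ) ^ k)
    (a : ℕ → ℝ) (ha0 : a 0 = 1)
    (ha : ∀ n : ℕ, a (n + 1) = f (n + 1) + (1 - q ^ n) * a n) :
    Filter.Tendsto (fun n : ℕ => (∑ i ∈ Finset.Icc 1 n, f i) - a n) Filter.atTop
      (nhds (∑' n : ℕ, (∑ i ∈ Finset.Icc 1 (n + 1), f i) * q ^ (n + 1) *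
        ∏' j : ℕ, (1 - q ^ (n + 2 + j)))) :=
  andrews_crippa_simon_limit_general q hq0 hq1 d c f hf a ha
end

section
/- Let q be a real number with 0 < q < 1. Then the fourth cumulant of the random variable γ_n^*(1) satisfies lim_{n→∞} ( e_{n,4}(q) - 4 e_{n,1}(q) e_{n,3}(q) - 3 e_{n,2}(q)^2 + 12 e_{n,1}(q)^2 e_{n,2}(q) - 6 e_{n,1}(q)^4 ) = ∑_{m=1}^∞ σ_3(m) q^m. -/
/-- The `k`-th moment `e_{n,k}(q) = ∑_{h=1}^n h^k q^{n-h} ∏_{j=1}^{h-1} (1 - q^{n-j})`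
of the Simon–Crippa–Collenberg random variable `γ_n^*(1)`. -/
noncomputable def momentE (q : ℝ) (n k : ℕ) : ℝ :=
  ∑ h ∈ Finset.Icc 1 n, (h : ℝ) ^ k * q ^ (n - h) * ∏ j ∈ Finset.Icc 1 (h - 1), (1 - q ^ (n - j))

/-!
Writing `m = n - h`, one has `Pr(γ_n^*(1) = h) = (q;q)_{n-1} c_m` with `c_m = q^m / (q;q)_m`, so
`n - γ_n^*(1)`, which has the same fourth cumulant, converges in moments to the law with weights
proportional to `c_m`. By Euler, `∑ c_m x^m = ∏_{i ≥ 1} (1 - x q^i)⁻¹`: the limit law is a sum of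
independent geometric laws, with cumulant generating function `∑_i -log (1 - e^θ q^i)`, so its
`j`-th cumulant is the Lambert series `∑_r r^(j-1) q^r / (1 - q^r)`, which for `j = 4` is
`∑ σ_3(m) q^m`. Formally, the cumulants enter through the moment–cumulant recursion, obtained by
comparing coefficients in `x P' = L P`, where `P(x) = ∑ c_m x^m` and
`L(x) = ∑_i x q^i / (1 - x q^i) = ∑_r q^r / (1 - q^r) x^r`.
-/

open Finset Filter Topology

namespace GammaStar

def fourthCumulant (μ : ℕ → ℝ) : ℝ :=
  μ 4 - 4 * μ 1 * μ 3 - 3 * μ 2 ^ 2 + 12 * μ 1 ^ 2 * μ 2 - 6 * μ 1 ^ 4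

lemma continuous_fourthCumulant : Continuous fourthCumulant := by
  unfold fourthCumulant
  fun_prop

/-- Here `κ b` plays the role of the `(b+1)`-st cumulant. -/
lemma fourthCumulant_eq_of_moment_recursion {μ κ : ℕ → ℝ} (h0 : μ 0 = 1)
    (h : ∀ k, μ (k + 1) = ∑ a ∈ range (k + 1), (k.choose a : ℝ) * κ (k - a) * μ a) :
    fourthCumulant μ = κ 3 := by
  have h1 := h 0
  have h2 := h 1
  have h3 := h 2
  have h4 := h 3
  norm_num [sum_range_succ, h0, Nat.choose] at h1 h2 h3 h4
  rw [fourthCumulant, h4, h3, h2, h1]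
  ring

lemma sum_mul_const_sub_pow {ι : Type*} (s : Finset ι) (w x : ι → ℝ) (c : ℝ) (k : ℕ) :
    ∑ i ∈ s, w i * (c - x i) ^ k =
      ∑ j ∈ range (k + 1), (-1) ^ j * c ^ (k - j) * k.choose j * ∑ i ∈ s, w i * x i ^ j := by
  simp_rw [sub_eq_neg_add _ (x _), add_pow, mul_sum]
  rw [sum_comm]
  exact sum_congr rfl fun j _ => sum_congr rfl fun i _ => by ring

lemma fourthCumulant_const_sub_moments {ι : Type*} (s : Finset ι) (w x : ι → ℝ) (c : ℝ)
    (hw : ∑ i ∈ s, w i = 1) :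
    fourthCumulant (fun k => ∑ i ∈ s, w i * (c - x i) ^ k) =
      fourthCumulant (fun k => ∑ i ∈ s, w i * x i ^ k) := by
  simp only [fourthCumulant, sum_mul_const_sub_pow s w x c, sum_range_succ, sum_range_zero,
    pow_zero, mul_one, hw]
  norm_num [Nat.choose]
  ring

/-- `Pr(γ_n^*(1) = h)`. -/
noncomputable def gammaProb (q : ℝ) (n h : ℕ) : ℝ :=
  q ^ (n - h) * ∏ j ∈ Icc 1 (h - 1), (1 - q ^ (n - j))

noncomputable def qPoch (q : ℝ) (m : ℕ) : ℝ := ∏ i ∈ Icc 1 m, (1 - q ^ i)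

noncomputable def eulerCoeff (q : ℝ) (m : ℕ) : ℝ := q ^ m / qPoch q m

/-- `lambertCoeff q 0 = 1 / 0 = 0`, so sums over `r` may start at `0`. -/
noncomputable def lambertCoeff (q : ℝ) (r : ℕ) : ℝ := q ^ r / (1 - q ^ r)

noncomputable def eulerMoment (q : ℝ) (k : ℕ) : ℝ := ∑' m : ℕ, (m : ℝ) ^ k * eulerCoeff q m

noncomputable def lambertSum (q : ℝ) (b : ℕ) : ℝ := ∑' r : ℕ, (r : ℝ) ^ b * lambertCoeff q r

variable {q : ℝ}

@[simp] lemma qPoch_zero : qPoch q 0 = 1 := by simp [qPoch]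

lemma qPoch_succ (m : ℕ) : qPoch q (m + 1) = qPoch q m * (1 - q ^ (m + 1)) :=
  prod_Icc_succ_top (Nat.le_add_left 1 m) _

lemma qPoch_eq_mul_prod_Ioc {a b : ℕ} (hab : a ≤ b) :
    qPoch q b = qPoch q a * ∏ i ∈ Ioc a b, (1 - q ^ i) := by
  have hIcc (c : ℕ) : Icc 1 c = Ioc 0 c := Icc_add_one_left_eq_Ioc 0 c
  rw [qPoch, qPoch, hIcc, hIcc, prod_Ioc_consecutive _ (Nat.zero_le a) hab]

@[simp] lemma eulerCoeff_zero : eulerCoeff q 0 = 1 := by simp [eulerCoeff]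

@[simp] lemma lambertCoeff_zero : lambertCoeff q 0 = 0 := by simp [lambertCoeff]

section UnitInterval

variable (hq0 : 0 ≤ q) (hq1 : q < 1)
include hq0 hq1

lemma norm_lt_one : ‖q‖ < 1 := by rwa [Real.norm_of_nonneg hq0]

lemma one_sub_pow_pos {i : ℕ} (hi : i ≠ 0) : 0 < 1 - q ^ i :=
  sub_pos.2 (pow_lt_one₀ hq0 hq1 hi)

lemma qPoch_pos (m : ℕ) : 0 < qPoch q m :=
  prod_pos fun i hi => one_sub_pow_pos hq0 hq1 (by simp at hi; omega)

lemma eulerCoeff_nonneg (m : ℕ) : 0 ≤ eulerCoeff q m :=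
  div_nonneg (pow_nonneg hq0 m) (qPoch_pos hq0 hq1 m).le

lemma lambertCoeff_nonneg (r : ℕ) : 0 ≤ lambertCoeff q r := by
  rcases eq_or_ne r 0 with rfl | hr
  · simp
  · exact div_nonneg (pow_nonneg hq0 r) (one_sub_pow_pos hq0 hq1 hr).le

lemma eulerCoeff_succ_mul (m : ℕ) :
    eulerCoeff q (m + 1) * (1 - q ^ (m + 1)) = q * eulerCoeff q m := by
  have := (qPoch_pos hq0 hq1 m).ne'
  have := (one_sub_pow_pos hq0 hq1 m.succ_ne_zero).ne'
  rw [eulerCoeff, eulerCoeff, qPoch_succ]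
  field_simp
  ring

lemma lambertCoeff_mul_one_sub {r : ℕ} (hr : r ≠ 0) :
    lambertCoeff q r * (1 - q ^ r) = q ^ r :=
  div_mul_cancel₀ _ (one_sub_pow_pos hq0 hq1 hr).ne'

lemma lambertCoeff_mul_pow {r : ℕ} (hr : r ≠ 0) (j : ℕ) :
    lambertCoeff q r * q ^ j = q ^ (r + j) * (1 + lambertCoeff q r) := by
  linear_combination q ^ j * lambertCoeff_mul_one_sub hq0 hq1 hr - lambertCoeff q r * pow_add q r j

lemma sum_range_eulerCoeff (m : ℕ) :
    ∑ j ∈ range (m + 1), eulerCoeff q j = (qPoch q m)⁻¹ := by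
  induction m with
  | zero => simp
  | succ m ih =>
    have := (qPoch_pos hq0 hq1 m).ne'
    have := (one_sub_pow_pos hq0 hq1 m.succ_ne_zero).ne'
    rw [sum_range_succ, ih, eulerCoeff, qPoch_succ]
    field_simp
    ring

lemma sum_Icc_eulerCoeff_reflect (m : ℕ) :
    ∑ r ∈ Icc 1 m, eulerCoeff q (m + 1 - r) = (qPoch q m)⁻¹ - 1 := by
  rw [← sum_range_eulerCoeff hq0 hq1, sum_range_succ', eulerCoeff_zero, add_sub_cancel_right]
  exact sum_nbij' (fun r => m - r) (fun k => m - k) (by intro r; simp; omega)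
    (by intro k; simp; omega) (by intro r; simp; omega) (by intro k; simp; omega)
    fun r hr => by simp at hr; congr 1; omega

/-- The coefficient of `x^m` in `x P' = L P`. -/
lemma sum_lambertCoeff_mul_eulerCoeff (m : ℕ) :
    ∑ r ∈ Icc 1 m, lambertCoeff q r * eulerCoeff q (m - r) = m * eulerCoeff q m := by
  induction m with
  | zero => simp
  | succ m ih =>
    have hsplit : ∑ r ∈ Icc 1 (m + 1), lambertCoeff q r * eulerCoeff q (m + 1 - r)
        = ∑ r ∈ Icc 1 m, lambertCoeff q r * eulerCoeff q (m + 1 - r) + lambertCoeff q (m + 1) := by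
      rw [sum_Icc_succ_top (by omega), Nat.sub_self, eulerCoeff_zero, mul_one]
    have hterm : ∀ r ∈ Icc 1 m, lambertCoeff q r * eulerCoeff q (m + 1 - r)
        = q * (lambertCoeff q r * eulerCoeff q (m - r)) + q ^ (m + 1) * eulerCoeff q (m + 1 - r)
          + q ^ (m + 1) * (lambertCoeff q r * eulerCoeff q (m + 1 - r)) := by
      intro r hr
      have hr0 : r ≠ 0 := by simp at hr; omega
      obtain ⟨j, rfl⟩ : ∃ j, m = r + j := ⟨m - r, by simp at hr; omega⟩
      rw [show r + j + 1 - r = j + 1 by omega, Nat.add_sub_cancel_left]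
      linear_combination lambertCoeff q r * eulerCoeff_succ_mul hq0 hq1 j
        + eulerCoeff q (j + 1) * lambertCoeff_mul_pow hq0 hq1 hr0 (j + 1)
    have hrec : ∑ r ∈ Icc 1 m, lambertCoeff q r * eulerCoeff q (m + 1 - r)
        = q * (m * eulerCoeff q m) + q ^ (m + 1) * ((qPoch q m)⁻¹ - 1)
          + q ^ (m + 1) * ∑ r ∈ Icc 1 m, lambertCoeff q r * eulerCoeff q (m + 1 - r) := by
      rw [← ih, ← sum_Icc_eulerCoeff_reflect hq0 hq1, mul_sum, mul_sum, mul_sum,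
        ← sum_add_distrib, ← sum_add_distrib]
      exact sum_congr rfl hterm
    have hm : m + 1 ≠ 0 := m.succ_ne_zero
    have := (qPoch_pos hq0 hq1 m).ne'
    have hc : q ^ (m + 1) * (qPoch q m)⁻¹ = q * eulerCoeff q m := by
      rw [eulerCoeff, pow_succ]
      field_simp
    refine mul_right_cancel₀ (one_sub_pow_pos hq0 hq1 hm).ne' ?_
    rw [hsplit]
    push_cast
    linear_combination hrec + lambertCoeff_mul_one_sub hq0 hq1 hm + hc
      - (m + 1) * eulerCoeff_succ_mul hq0 hq1 m

lemma sum_antidiagonal_lambertCoeff_mul_eulerCoeff (m : ℕ) :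
    ∑ p ∈ antidiagonal m, lambertCoeff q p.1 * eulerCoeff q p.2 = m * eulerCoeff q m := by
  rw [Nat.sum_antidiagonal_eq_sum_range_succ (fun r j => lambertCoeff q r * eulerCoeff q j),
    range_eq_Ico, sum_eq_sum_Ico_succ_bot m.succ_pos, lambertCoeff_zero, zero_mul, zero_add,
    zero_add, Nat.succ_eq_add_one, Ico_add_one_right_eq_Icc,
    sum_lambertCoeff_mul_eulerCoeff hq0 hq1]

lemma summable_pow_mul_lambertCoeff (b : ℕ) :
    Summable fun r : ℕ => (r : ℝ) ^ b * lambertCoeff q r := by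
  simpa only [lambertCoeff, mul_div_assoc] using
    summable_norm_pow_mul_geometric_div_one_sub b (norm_lt_one hq0 hq1)

lemma exp_neg_lambertCoeff_le {i : ℕ} (hi : i ≠ 0) :
    Real.exp (-lambertCoeff q i) ≤ 1 - q ^ i := by
  have hpos := one_sub_pow_pos hq0 hq1 hi
  have hinv : 1 + lambertCoeff q i = (1 - q ^ i)⁻¹ := by
    refine eq_inv_of_mul_eq_one_left ?_
    linear_combination lambertCoeff_mul_one_sub hq0 hq1 hi
  rw [Real.exp_neg, inv_le_comm₀ (Real.exp_pos _) hpos, ← hinv, add_comm]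
  exact Real.add_one_le_exp _

lemma exp_neg_lambertSum_zero_le_qPoch (m : ℕ) : Real.exp (-lambertSum q 0) ≤ qPoch q m := by
  have hsum : ∑ i ∈ Icc 1 m, lambertCoeff q i ≤ lambertSum q 0 := by
    simpa [lambertSum] using (summable_pow_mul_lambertCoeff hq0 hq1 0).sum_le_tsum (Icc 1 m)
      fun i _ => by simpa using lambertCoeff_nonneg hq0 hq1 i
  calc Real.exp (-lambertSum q 0) ≤ Real.exp (∑ i ∈ Icc 1 m, -lambertCoeff q i) := by
        rw [sum_neg_distrib, Real.exp_le_exp]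
        linarith
    _ = ∏ i ∈ Icc 1 m, Real.exp (-lambertCoeff q i) := Real.exp_sum _ _
    _ ≤ qPoch q m := prod_le_prod (fun _ _ => (Real.exp_pos _).le)
        fun i hi => exp_neg_lambertCoeff_le hq0 hq1 (by simp at hi; omega)

lemma summable_pow_mul_eulerCoeff (k : ℕ) :
    Summable fun m : ℕ => (m : ℝ) ^ k * eulerCoeff q m := by
  have hbound (m : ℕ) :
      (m : ℝ) ^ k * eulerCoeff q m ≤ Real.exp (lambertSum q 0) * (m ^ k * q ^ m) := by
    have hinv : (qPoch q m)⁻¹ ≤ Real.exp (lambertSum q 0) := by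
      rw [inv_le_comm₀ (qPoch_pos hq0 hq1 m) (Real.exp_pos _), ← Real.exp_neg]
      exact exp_neg_lambertSum_zero_le_qPoch hq0 hq1 m
    calc (m : ℝ) ^ k * eulerCoeff q m = m ^ k * q ^ m * (qPoch q m)⁻¹ := by
          rw [eulerCoeff, div_eq_mul_inv, mul_assoc]
      _ ≤ m ^ k * q ^ m * Real.exp (lambertSum q 0) := by gcongr
      _ = _ := mul_comm _ _
  exact .of_nonneg_of_le (fun m => mul_nonneg (by positivity) (eulerCoeff_nonneg hq0 hq1 m)) hbound
    ((summable_pow_mul_geometric_of_norm_lt_one k (norm_lt_one hq0 hq1)).mul_left _)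

lemma pow_succ_mul_eulerCoeff (k m : ℕ) :
    (m : ℝ) ^ (k + 1) * eulerCoeff q m = ∑ a ∈ range (k + 1), (k.choose a : ℝ) *
      ∑ p ∈ antidiagonal m,
        (p.1 : ℝ) ^ (k - a) * lambertCoeff q p.1 * ((p.2 : ℝ) ^ a * eulerCoeff q p.2) := by
  simp_rw [pow_succ, mul_assoc, ← sum_antidiagonal_lambertCoeff_mul_eulerCoeff hq0 hq1, mul_sum]
  rw [sum_comm]
  refine sum_congr rfl fun p hp => ?_
  rw [← mem_antidiagonal.1 hp, Nat.cast_add, add_comm, add_pow, sum_mul]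
  exact sum_congr rfl fun a _ => by ring

/-- The moment–cumulant recursion of the law with weights `eulerCoeff q`, whose `(b+1)`-st
cumulant is `lambertSum q b`. -/
lemma eulerMoment_succ (k : ℕ) :
    eulerMoment q (k + 1) =
      ∑ a ∈ range (k + 1), (k.choose a : ℝ) * lambertSum q (k - a) * eulerMoment q a := by
  have hs (b : ℕ) : Summable fun r : ℕ => ‖(r : ℝ) ^ b * lambertCoeff q r‖ :=
    summable_abs_iff.2 (summable_pow_mul_lambertCoeff hq0 hq1 b)
  have hc (a : ℕ) : Summable fun m : ℕ => ‖(m : ℝ) ^ a * eulerCoeff q m‖ :=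
    summable_abs_iff.2 (summable_pow_mul_eulerCoeff hq0 hq1 a)
  calc eulerMoment q (k + 1)
      = ∑' m : ℕ, ∑ a ∈ range (k + 1), (k.choose a : ℝ) * ∑ p ∈ antidiagonal m,
          (p.1 : ℝ) ^ (k - a) * lambertCoeff q p.1 * ((p.2 : ℝ) ^ a * eulerCoeff q p.2) :=
        tsum_congr (pow_succ_mul_eulerCoeff hq0 hq1 k)
    _ = ∑ a ∈ range (k + 1), (k.choose a : ℝ) * ∑' m : ℕ, ∑ p ∈ antidiagonal m,
          (p.1 : ℝ) ^ (k - a) * lambertCoeff q p.1 * ((p.2 : ℝ) ^ a * eulerCoeff q p.2) := by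
        rw [Summable.tsum_finsetSum fun a _ => .mul_left _
          (summable_norm_sum_mul_antidiagonal_of_summable_norm (hs (k - a)) (hc a)).of_norm]
        simp_rw [tsum_mul_left]
    _ = _ := sum_congr rfl fun a _ => by
        rw [lambertSum, eulerMoment, mul_assoc,
          tsum_mul_tsum_eq_tsum_sum_antidiagonal_of_summable_norm (hs (k - a)) (hc a)]

lemma eulerMoment_zero_pos : 0 < eulerMoment q 0 :=
  zero_lt_one.trans_le <| by
    simpa [eulerMoment] using (summable_pow_mul_eulerCoeff hq0 hq1 0).le_tsum 0
      fun m _ => by simpa using eulerCoeff_nonneg hq0 hq1 m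

lemma fourthCumulant_eulerMoment_div :
    fourthCumulant (fun k => eulerMoment q k / eulerMoment q 0) = lambertSum q 3 := by
  refine fourthCumulant_eq_of_moment_recursion (div_self (eulerMoment_zero_pos hq0 hq1).ne')
    fun k => ?_
  rw [eulerMoment_succ hq0 hq1, sum_div]
  exact sum_congr rfl fun a _ => mul_div_assoc _ _ _

lemma lambertSum_eq_tsum_sum_divisors (k : ℕ) :
    lambertSum q k = ∑' m : ℕ, (∑ d ∈ (m + 1).divisors, (d : ℝ) ^ k) * q ^ (m + 1) := by
  have h := tsum_pow_div_one_sub_eq_tsum_sigma (norm_lt_one hq0 hq1) k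
  rw [tsum_pnat_eq_tsum_succ (f := fun n => (n : ℝ) ^ k * q ^ n / (1 - q ^ n)),
    tsum_pnat_eq_tsum_succ (f := fun n => (ArithmeticFunction.sigma k n : ℝ) * q ^ n)] at h
  simp only [ArithmeticFunction.sigma_apply, Nat.cast_sum, Nat.cast_pow] at h
  rw [lambertSum, (summable_pow_mul_lambertCoeff hq0 hq1 k).tsum_eq_zero_add, ← h]
  simp [lambertCoeff, mul_div_assoc]

lemma gammaProb_eq_qPoch_mul_eulerCoeff {n h : ℕ} (h1 : 1 ≤ h) (hn : h ≤ n) :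
    gammaProb q n h = qPoch q (n - 1) * eulerCoeff q (n - h) := by
  have hreflect : ∏ j ∈ Icc 1 (h - 1), (1 - q ^ (n - j)) = ∏ i ∈ Ioc (n - h) (n - 1), (1 - q ^ i) :=
    prod_nbij' (fun j => n - j) (fun i => n - i) (by intro j; simp; omega) (by intro i; simp; omega)
      (by intro j; simp; omega) (by intro i; simp; omega) fun _ _ => rfl
  have := (qPoch_pos hq0 hq1 (n - h)).ne'
  rw [gammaProb, hreflect, qPoch_eq_mul_prod_Ioc (show n - h ≤ n - 1 by omega), eulerCoeff]
  field_simp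

lemma sum_gammaProb_mul (n : ℕ) (f : ℕ → ℝ) :
    ∑ h ∈ Icc 1 n, gammaProb q n h * f (n - h) =
      (∑ m ∈ range n, f m * eulerCoeff q m) / ∑ m ∈ range n, eulerCoeff q m := by
  obtain rfl | hn := Nat.eq_zero_or_pos n
  · simp
  have hpoch : qPoch q (n - 1) = (∑ m ∈ range n, eulerCoeff q m)⁻¹ := by
    rw [← Nat.sub_add_cancel hn, sum_range_eulerCoeff hq0 hq1, inv_inv, Nat.add_sub_cancel]
  rw [div_eq_inv_mul, ← hpoch, mul_sum]
  refine sum_nbij' (fun h => n - h) (fun m => n - m) (by intro h; simp; omega)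
    (by intro m; simp; omega) (by intro h; simp; omega) (by intro m; simp; omega) fun h hh => ?_
  rw [gammaProb_eq_qPoch_mul_eulerCoeff hq0 hq1 (mem_Icc.1 hh).1 (mem_Icc.1 hh).2]
  ring

lemma fourthCumulant_momentE {n : ℕ} (hn : 1 ≤ n) :
    fourthCumulant (momentE q n) = fourthCumulant fun k =>
      (∑ m ∈ range n, (m : ℝ) ^ k * eulerCoeff q m) / ∑ m ∈ range n, eulerCoeff q m := by
  have hreflected (k : ℕ) : ∑ h ∈ Icc 1 n, gammaProb q n h * ((n : ℝ) - h) ^ k =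
      (∑ m ∈ range n, (m : ℝ) ^ k * eulerCoeff q m) / ∑ m ∈ range n, eulerCoeff q m := by
    rw [← sum_gammaProb_mul hq0 hq1 n]
    exact sum_congr rfl fun h hh => by rw [Nat.cast_sub (mem_Icc.1 hh).2]
  have htotal : ∑ h ∈ Icc 1 n, gammaProb q n h = 1 := by
    have hpos : 0 < ∑ m ∈ range n, eulerCoeff q m := by
      rw [← Nat.sub_add_cancel hn, sum_range_eulerCoeff hq0 hq1]
      exact inv_pos.2 (qPoch_pos hq0 hq1 _)
    simpa [hpos.ne'] using hreflected 0
  have hmoment : momentE q n = fun k => ∑ h ∈ Icc 1 n, gammaProb q n h * (h : ℝ) ^ k :=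
    funext fun k => sum_congr rfl fun h _ => by rw [gammaProb]; ring
  rw [hmoment, ← fourthCumulant_const_sub_moments _ _ _ n htotal]
  simp_rw [hreflected]

lemma tendsto_fourthCumulant_momentE :
    Tendsto (fun n => fourthCumulant (momentE q n)) atTop
      (𝓝 (fourthCumulant fun k => eulerMoment q k / eulerMoment q 0)) := by
  have hmass : Tendsto (fun n => ∑ m ∈ range n, eulerCoeff q m) atTop (𝓝 (eulerMoment q 0)) := by
    simpa [eulerMoment] using (summable_pow_mul_eulerCoeff hq0 hq1 0).hasSum.tendsto_sum_nat
  have hmoments : Tendsto (fun n k =>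
      (∑ m ∈ range n, (m : ℝ) ^ k * eulerCoeff q m) / ∑ m ∈ range n, eulerCoeff q m) atTop
      (𝓝 fun k => eulerMoment q k / eulerMoment q 0) :=
    tendsto_pi_nhds.2 fun k => (summable_pow_mul_eulerCoeff hq0 hq1 k).hasSum.tendsto_sum_nat.div
      hmass (eulerMoment_zero_pos hq0 hq1).ne'
  refine ((continuous_fourthCumulant.tendsto _).comp hmoments).congr' ?_
  filter_upwards [eventually_ge_atTop 1] with n hn
  exact (fourthCumulant_momentE hq0 hq1 hn).symm

end UnitInterval

end GammaStar

open GammaStar in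
/-- For `0 < q < 1`, the fourth cumulant of `γ_n^*(1)` satisfies
`lim_{n→∞} (e_{n,4} - 4 e_{n,1} e_{n,3} - 3 e_{n,2}^2 + 12 e_{n,1}^2 e_{n,2} - 6 e_{n,1}^4)
  = ∑_{m=1}^∞ σ_3(m) q^m`. -/
theorem fourth_cumulant_limit (q : ℝ) (hq0 : 0 < q) (hq1 : q < 1) :
    Filter.Tendsto
      (fun n : ℕ => momentE q n 4 - 4 * momentE q n 1 * momentE q n 3
        - 3 * (momentE q n 2) ^ 2 + 12 * (momentE q n 1) ^ 2 * momentE q n 2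
        - 6 * (momentE q n 1) ^ 4)
      Filter.atTop
      (nhds (∑' m : ℕ, (∑ d ∈ (m + 1).divisors, (d : ℝ) ^ 3) * q ^ (m + 1))) := by
  rw [← lambertSum_eq_tsum_sum_divisors hq0.le hq1, ← fourthCumulant_eulerMoment_div hq0.le hq1]
  exact tendsto_fourthCumulant_momentE hq0.le hq1
end

section
/- Let q be a real number with 0 < q < 1 and let z be a real number with e^z q < 1. Then the moment generating function of Z_n = n - γ_n^*(1) converges: lim_{n→∞} ∑_{h=1}^n e^{z(n-h)} q^{n-h} ∏_{j=1}^{h-1} (1 - q^{n-j}) = ∏_{ℓ=1}^∞ (1 - q^ℓ)/(1 - e^z q^ℓ). -/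
/-
Put `x = e^z q` and `k = n - h`. The `n`-th sum becomes `∑_{k<n} xᵏ ∏_{m=k+1}^{n-1} (1 - qᵐ)`;
its `k`-th term tends to `xᵏ (q^{k+1}; q)_∞` and is bounded by `xᵏ`, so by Tannery's theorem the
sums tend to `G(x) = ∑ₖ xᵏ (q^{k+1}; q)_∞`. From `(q^{k+1}; q)_∞ = (1 - q^{k+1}) (q^{k+2}; q)_∞`
one gets `G(q x) = (1 - x) G(x)`, hence `G(x) ∏_{l<n} (1 - x qˡ) = G(qⁿ x) → G(0) = (q; q)_∞`,
i.e. `G(x) = (q; q)_∞ / (x; q)_∞` (Euler), which is the claimed product.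
-/

open Filter Finset Topology

lemma tendsto_sum_range_of_dominated_convergence {G : Type*} [NormedAddCommGroup G]
    [CompleteSpace G] {f : ℕ → ℕ → G} {g : ℕ → G} {bound : ℕ → ℝ} (h_sum : Summable bound)
    (hab : ∀ k, Tendsto (f · k) atTop (𝓝 (g k)))
    (h_bound : ∀ n k, k < n → ‖f n k‖ ≤ bound k) :
    Tendsto (fun n ↦ ∑ k ∈ range n, f n k) atTop (𝓝 (∑' k, g k)) := by
  have key := tendsto_tsum_of_dominated_convergence (f := fun n k ↦ if k < n then f n k else 0)
    h_sum (fun k ↦ (hab k).congr' ?_) (Eventually.of_forall fun n k ↦ ?_)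
  · refine key.congr fun n ↦ ?_
    rw [tsum_eq_sum (s := range n) fun k hk ↦ if_neg (by simpa using hk)]
    exact sum_congr rfl fun k hk ↦ if_pos (mem_range.1 hk)
  · filter_upwards [eventually_gt_atTop k] with n hn
    exact (if_pos hn).symm
  · split_ifs with hk
    · exact h_bound n k hk
    · simpa using (norm_nonneg _).trans (h_bound (k + 1) k k.lt_succ_self)

noncomputable def qPochhammer (a q : ℝ) : ℝ := ∏' m : ℕ, (1 - a * q ^ m)

section qPochhammer

variable {a q : ℝ}

lemma one_sub_mul_pow_pos (hq0 : 0 ≤ q) (hq1 : q ≤ 1) (ha0 : 0 ≤ a) (ha1 : a < 1) (m : ℕ) :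
    0 < 1 - a * q ^ m := by
  have : a * q ^ m ≤ a := mul_le_of_le_one_right ha0 (pow_le_one₀ hq0 hq1)
  linarith

lemma one_sub_mul_pow_le_one (hq0 : 0 ≤ q) (ha0 : 0 ≤ a) (m : ℕ) : 1 - a * q ^ m ≤ 1 := by
  have := mul_nonneg ha0 (pow_nonneg hq0 m)
  linarith

lemma summable_log_one_sub_mul_pow (hq0 : 0 ≤ q) (hq1 : q < 1) :
    Summable fun m : ℕ ↦ Real.log (1 - a * q ^ m) := by
  simpa only [sub_eq_add_neg] using Real.summable_log_one_add_of_summable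
    ((summable_geometric_of_lt_one hq0 hq1).mul_left a).neg

lemma hasProd_qPochhammer (hq0 : 0 ≤ q) (hq1 : q < 1) (ha0 : 0 ≤ a) (ha1 : a < 1) :
    HasProd (fun m : ℕ ↦ 1 - a * q ^ m) (qPochhammer a q) :=
  (Real.multipliable_of_summable_log (one_sub_mul_pow_pos hq0 hq1.le ha0 ha1)
    (summable_log_one_sub_mul_pow hq0 hq1)).hasProd

lemma qPochhammer_pos (hq0 : 0 ≤ q) (hq1 : q < 1) (ha0 : 0 ≤ a) (ha1 : a < 1) :
    0 < qPochhammer a q := by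
  rw [qPochhammer, ← Real.rexp_tsum_eq_tprod (one_sub_mul_pow_pos hq0 hq1.le ha0 ha1)
    (summable_log_one_sub_mul_pow hq0 hq1)]
  exact Real.exp_pos _

lemma qPochhammer_le_one (hq0 : 0 ≤ q) (hq1 : q < 1) (ha0 : 0 ≤ a) (ha1 : a < 1) :
    qPochhammer a q ≤ 1 :=
  le_of_tendsto' (hasProd_qPochhammer hq0 hq1 ha0 ha1).tendsto_prod_nat fun _ ↦
    prod_le_one (fun m _ ↦ (one_sub_mul_pow_pos hq0 hq1.le ha0 ha1 m).le)
      fun m _ ↦ one_sub_mul_pow_le_one hq0 ha0 m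

lemma qPochhammer_eq_one_sub_mul (hq0 : 0 ≤ q) (hq1 : q < 1) (ha0 : 0 ≤ a) (ha1 : a < 1) :
    qPochhammer a q = (1 - a) * qPochhammer (a * q) q := by
  have haq : a * q < 1 := by nlinarith
  have hshift : (fun m : ℕ ↦ 1 - a * q ^ (m + 1)) = fun m ↦ 1 - a * q * q ^ m := by
    funext m; ring
  rw [qPochhammer, tprod_eq_zero_mul' (by
      rw [hshift]; exact (hasProd_qPochhammer hq0 hq1 (by positivity) haq).multipliable),
    hshift, pow_zero, mul_one, qPochhammer]

end qPochhammer

/-- `(q; q)_∞ ∑ₖ xᵏ / (q; q)ₖ`. -/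
noncomputable def eulerSeries (q x : ℝ) : ℝ := ∑' k : ℕ, x ^ k * qPochhammer (q ^ (k + 1)) q

section eulerSeries

variable {q : ℝ}

lemma qPochhammer_pow_succ (hq0 : 0 ≤ q) (hq1 : q < 1) (k : ℕ) :
    qPochhammer (q ^ (k + 1)) q = (1 - q ^ (k + 1)) * qPochhammer (q ^ (k + 2)) q := by
  rw [qPochhammer_eq_one_sub_mul hq0 hq1 (pow_nonneg hq0 _) (pow_lt_one₀ hq0 hq1 k.succ_ne_zero),
    ← pow_succ]

lemma abs_pow_mul_qPochhammer_le (hq0 : 0 ≤ q) (hq1 : q < 1) (x : ℝ) (k : ℕ) :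
    |x ^ k * qPochhammer (q ^ (k + 1)) q| ≤ |x| ^ k := by
  have hpos := qPochhammer_pos hq0 hq1 (pow_nonneg hq0 (k + 1)) (pow_lt_one₀ hq0 hq1 k.succ_ne_zero)
  rw [abs_mul, abs_pow, abs_of_pos hpos]
  exact mul_le_of_le_one_right (by positivity)
    (qPochhammer_le_one hq0 hq1 (pow_nonneg hq0 _) (pow_lt_one₀ hq0 hq1 k.succ_ne_zero))

lemma summable_eulerSeries (hq0 : 0 ≤ q) (hq1 : q < 1) {x : ℝ} (hx : |x| < 1) :
    Summable fun k : ℕ ↦ x ^ k * qPochhammer (q ^ (k + 1)) q :=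
  (summable_geometric_of_lt_one (abs_nonneg x) hx).of_norm_bounded
    (abs_pow_mul_qPochhammer_le hq0 hq1 x)

lemma eulerSeries_mul_left (hq0 : 0 ≤ q) (hq1 : q < 1) {y : ℝ} (hy : |y| < 1) :
    eulerSeries q (q * y) = (1 - y) * eulerSeries q y := by
  have hqy : |q * y| < 1 := by
    rw [abs_mul, abs_of_nonneg hq0]; nlinarith [abs_nonneg y]
  have hs := summable_eulerSeries hq0 hq1 hy
  have hs' := (summable_nat_add_iff 1).2 hs
  have hdiff : ∑' k : ℕ, (q * y) ^ (k + 1) * qPochhammer (q ^ (k + 1 + 1)) q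
      = ∑' k : ℕ, y ^ (k + 1) * qPochhammer (q ^ (k + 1 + 1)) q - y * eulerSeries q y := by
    rw [eulerSeries, ← tsum_mul_left, ← hs'.tsum_sub (hs.mul_left y)]
    refine tsum_congr fun k ↦ ?_
    rw [qPochhammer_pow_succ hq0 hq1 k]
    ring
  have hsplit : eulerSeries q y
      = qPochhammer q q + ∑' k : ℕ, y ^ (k + 1) * qPochhammer (q ^ (k + 1 + 1)) q := by
    rw [eulerSeries, hs.tsum_eq_zero_add, pow_zero, one_mul, zero_add, pow_one]
  rw [eulerSeries, (summable_eulerSeries hq0 hq1 hqy).tsum_eq_zero_add, hdiff, pow_zero, one_mul,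
    zero_add, pow_one]
  linear_combination -hsplit

lemma eulerSeries_pow_mul (hq0 : 0 ≤ q) (hq1 : q < 1) {x : ℝ} (hx : |x| < 1) (n : ℕ) :
    eulerSeries q (q ^ n * x) = eulerSeries q x * ∏ l ∈ range n, (1 - x * q ^ l) := by
  induction n with
  | zero => simp
  | succ n ih =>
    have hy : |q ^ n * x| < 1 := by
      rw [abs_mul, abs_of_nonneg (pow_nonneg hq0 n)]
      nlinarith [pow_le_one₀ hq0 hq1.le (n := n), abs_nonneg x]
    rw [pow_succ', mul_assoc, eulerSeries_mul_left hq0 hq1 hy, ih, prod_range_succ]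
    ring

lemma tendsto_eulerSeries_pow_mul (hq0 : 0 ≤ q) (hq1 : q < 1) {x : ℝ} (hx : |x| < 1) :
    Tendsto (fun n : ℕ ↦ eulerSeries q (q ^ n * x)) atTop (𝓝 (qPochhammer q q)) := by
  have hpow : Tendsto (fun n : ℕ ↦ q ^ n * x) atTop (𝓝 0) := by
    simpa using (tendsto_pow_atTop_nhds_zero_of_lt_one hq0 hq1).mul_const x
  have key := tendsto_tsum_of_dominated_convergence
    (f := fun n k ↦ (q ^ n * x) ^ k * qPochhammer (q ^ (k + 1)) q)
    (summable_geometric_of_lt_one (abs_nonneg x) hx)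
    (fun k ↦ (hpow.pow k).mul_const _)
    (Eventually.of_forall fun n k ↦ (abs_pow_mul_qPochhammer_le hq0 hq1 _ k).trans ?_)
  · rwa [tsum_eq_single 0 fun k hk ↦ by simp [hk], pow_zero, one_mul, zero_add, pow_one] at key
  · rw [abs_mul, abs_of_nonneg (pow_nonneg hq0 n)]
    exact pow_le_pow_left₀ (by positivity)
      (mul_le_of_le_one_left (abs_nonneg x) (pow_le_one₀ hq0 hq1.le)) k

lemma eulerSeries_eq_div (hq0 : 0 ≤ q) (hq1 : q < 1) {x : ℝ} (hx0 : 0 ≤ x) (hx1 : x < 1) :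
    eulerSeries q x = qPochhammer q q / qPochhammer x q := by
  have hx : |x| < 1 := by rwa [abs_of_nonneg hx0]
  have hlim := ((hasProd_qPochhammer hq0 hq1 hx0 hx1).tendsto_prod_nat).const_mul
    (eulerSeries q x)
  simp_rw [← eulerSeries_pow_mul hq0 hq1 hx] at hlim
  rw [tendsto_nhds_unique (tendsto_eulerSeries_pow_mul hq0 hq1 hx) hlim,
    mul_div_cancel_right₀ _ (qPochhammer_pos hq0 hq1 hx0 hx1).ne']

lemma tendsto_prod_Ico_one_sub_pow (hq0 : 0 ≤ q) (hq1 : q < 1) (k : ℕ) :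
    Tendsto (fun n ↦ ∏ m ∈ Ico (k + 1) n, (1 - q ^ m)) atTop
      (𝓝 (qPochhammer (q ^ (k + 1)) q)) := by
  simp_rw [prod_Ico_eq_prod_range, pow_add q (k + 1)]
  exact (hasProd_qPochhammer hq0 hq1 (pow_nonneg hq0 _)
    (pow_lt_one₀ hq0 hq1 k.succ_ne_zero)).tendsto_prod_nat.comp (tendsto_sub_atTop_nat _)

lemma tendsto_sum_range_pow_mul_prod_Ico (hq0 : 0 ≤ q) (hq1 : q < 1) {x : ℝ} (hx : |x| < 1) :
    Tendsto (fun n ↦ ∑ k ∈ range n, x ^ k * ∏ m ∈ Ico (k + 1) n, (1 - q ^ m)) atTop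
      (𝓝 (eulerSeries q x)) := by
  refine tendsto_sum_range_of_dominated_convergence (summable_geometric_of_lt_one
    (abs_nonneg x) hx) (fun k ↦ (tendsto_prod_Ico_one_sub_pow hq0 hq1 k).const_mul _)
    fun n k _ ↦ ?_
  have hfactor : ∀ m ∈ Ico (k + 1) n, 0 ≤ 1 - q ^ m ∧ 1 - q ^ m ≤ 1 := fun m _ ↦
    ⟨sub_nonneg.2 (pow_le_one₀ hq0 hq1.le), sub_le_self _ (pow_nonneg hq0 m)⟩
  rw [Real.norm_eq_abs, abs_mul, abs_pow, abs_of_nonneg (prod_nonneg fun m hm ↦ (hfactor m hm).1)]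
  exact mul_le_of_le_one_right (by positivity)
    (prod_le_one (fun m hm ↦ (hfactor m hm).1) fun m hm ↦ (hfactor m hm).2)

end eulerSeries

lemma sum_Icc_exp_mul_pow_mul_prod_eq (z q : ℝ) (n : ℕ) :
    ∑ h ∈ Icc 1 n, Real.exp (z * ((n - h : ℕ) : ℝ)) * q ^ (n - h) *
        ∏ j ∈ Icc 1 (h - 1), (1 - q ^ (n - j))
      = ∑ k ∈ range n, (Real.exp z * q) ^ k * ∏ m ∈ Ico (k + 1) n, (1 - q ^ m) := by
  refine sum_nbij' (n - ·) (n - ·) (by simp; omega) (by simp; omega) (by simp; omega)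
    (by simp; omega) fun h hh ↦ ?_
  rw [mem_Icc] at hh
  rw [mul_pow, ← Real.exp_nat_mul, mul_comm z]
  congr 1
  exact prod_nbij' (n - ·) (n - ·) (by simp; omega) (by simp; omega) (by simp; omega)
    (by simp; omega) (by simp)

/-- For `0 < q < 1` and real `z` with `e^z q < 1`, the moment generating function of
`Z_n = n - γ_n^*(1)` converges:
`lim_{n→∞} ∑_{h=1}^n e^{z(n-h)} q^{n-h} ∏_{j=1}^{h-1} (1 - q^{n-j})
  = ∏_{ℓ=1}^∞ (1 - q^ℓ)/(1 - e^z q^ℓ)`. -/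
theorem mgf_limit (q z : ℝ) (hq0 : 0 < q) (hq1 : q < 1) (hz : Real.exp z * q < 1) :
    Filter.Tendsto
      (fun n : ℕ => ∑ h ∈ Finset.Icc 1 n, Real.exp (z * ((n - h : ℕ) : ℝ)) * q ^ (n - h) *
        ∏ j ∈ Finset.Icc 1 (h - 1), (1 - q ^ (n - j)))
      Filter.atTop
      (nhds (∏' l : ℕ, (1 - q ^ (l + 1)) / (1 - Real.exp z * q ^ (l + 1)))) := by
  have hx0 : 0 ≤ Real.exp z * q := by positivity
  have hlimit : ∏' l : ℕ, (1 - q ^ (l + 1)) / (1 - Real.exp z * q ^ (l + 1))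
      = eulerSeries q (Real.exp z * q) := by
    rw [eulerSeries_eq_div hq0.le hq1 hx0 hz, ← ((hasProd_qPochhammer hq0.le hq1 hq0.le hq1).div₀
      (hasProd_qPochhammer hq0.le hq1 hx0 hz) (qPochhammer_pos hq0.le hq1 hx0 hz).ne').tprod_eq]
    simp only [pow_succ', mul_assoc]
  simp_rw [sum_Icc_exp_mul_pow_mul_prod_eq, hlimit]
  exact tendsto_sum_range_pow_mul_prod_Ico hq0.le hq1 (by rwa [abs_of_nonneg hx0])
end

section
/- Let q be a real number with 0 < q < 1 and let z be a real number with e^{|z|} q < 1. Then ∑_{t=1}^∞ (z^t / t!) ∑_{n=1}^∞ σ_{t-1}(n) q^n = ∑_{ℓ=1}^∞ ( log(1 - q^ℓ) - log(1 - e^z q^ℓ) ), i.e., the exponential generating function of the divisor generating functions K_t(q) equals log( (q)_∞ / (e^z q)_∞ ). -/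
open Real

/-!
Writing `K_t(q) = ∑_{m,d ≥ 1} d^(t-1) q^(md)`, the left side is a triple series over `(m, d, t)`.
Summing over `t` first gives `(e^(zd) - 1) q^(md) / d = ((e^z q^m)^d - (q^m)^d) / d`, and summing
that over `d` gives `log (1 - q^m) - log (1 - e^z q^m)`. The rearrangements are justified by
absolute convergence: the absolute values form the same triple series with `|z|` in place of `z`,
whose sum over `t` is at most `(e^|z| q)^(md)`.
-/

lemma Real.hasSum_pow_succ_div_factorial (x : ℝ) :
    HasSum (fun t : ℕ => x ^ (t + 1) / (Nat.factorial (t + 1) : ℝ)) (exp x - 1) := by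
  have h := NormedSpace.expSeries_div_hasSum_exp x
  rw [← Real.exp_eq_exp_ℝ] at h
  simpa using (hasSum_nat_add_iff' 1).mpr h

lemma Real.hasSum_pow_div_pnat {x : ℝ} (hx : |x| < 1) :
    HasSum (fun n : ℕ+ => x ^ (n : ℕ) / ((n : ℕ) : ℝ)) (-log (1 - x)) := by
  rw [hasSum_pnat_iff_hasSum_succ (f := fun n : ℕ => x ^ n / (n : ℝ))]
  simpa using hasSum_pow_div_log_of_abs_lt_one hx

lemma Real.hasSum_pow_sub_pow_div_pnat {a b : ℝ} (ha : |a| < 1) (hb : |b| < 1) :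
    HasSum (fun n : ℕ+ => (b ^ (n : ℕ) - a ^ (n : ℕ)) / ((n : ℕ) : ℝ))
      (log (1 - a) - log (1 - b)) := by
  rw [show log (1 - a) - log (1 - b) = -log (1 - b) - -log (1 - a) by ring]
  exact ((hasSum_pow_div_pnat hb).sub (hasSum_pow_div_pnat ha)).congr_fun fun n => sub_div _ _ _

theorem tsum_sum_divisors_pow_mul_pow_succ {𝕜 : Type*} [NontriviallyNormedField 𝕜]
    [CompleteSpace 𝕜] [NormSMulClass ℤ 𝕜] (k : ℕ) {r : 𝕜} (hr : ‖r‖ < 1) :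
    ∑' n : ℕ, (∑ d ∈ (n + 1).divisors, (d : 𝕜) ^ k) * r ^ (n + 1)
      = ∑' c : ℕ+ × ℕ+, ((c.2 : ℕ) : 𝕜) ^ k * r ^ ((c.1 : ℕ) * c.2) := by
  rw [(summable_prod_mul_pow k hr).tsum_prod, tsum_prod_pow_eq_tsum_sigma k hr,
    tsum_pnat_eq_tsum_succ (f := fun n => (ArithmeticFunction.sigma k n : 𝕜) * r ^ n)]
  simp [ArithmeticFunction.sigma_apply]

noncomputable def egfTerm (q z : ℝ) (x : (ℕ+ × ℕ+) × ℕ) : ℝ :=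
  z ^ (x.2 + 1) / (Nat.factorial (x.2 + 1) : ℝ) *
    (((x.1.2 : ℕ) : ℝ) ^ x.2 * q ^ ((x.1.1 : ℕ) * x.1.2))

lemma hasSum_egfTerm (q z : ℝ) (p : ℕ+ × ℕ+) :
    HasSum (fun t => egfTerm q z (p, t))
      (((exp z * q ^ (p.1 : ℕ)) ^ (p.2 : ℕ) - (q ^ (p.1 : ℕ)) ^ (p.2 : ℕ)) / ((p.2 : ℕ) : ℝ)) := by
  obtain ⟨m, d⟩ := p
  have hsum : ((exp z * q ^ (m : ℕ)) ^ (d : ℕ) - (q ^ (m : ℕ)) ^ (d : ℕ)) / ((d : ℕ) : ℝ)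
      = (exp (z * (d : ℕ)) - 1) * (q ^ ((m : ℕ) * d) / ((d : ℕ) : ℝ)) := by
    rw [mul_pow, mul_comm z, exp_nat_mul, ← pow_mul]
    ring
  rw [hsum]
  refine ((hasSum_pow_succ_div_factorial (z * (d : ℕ))).mul_right _).congr_fun fun t => ?_
  simp only [egfTerm]
  field_simp
  ring

lemma norm_egfTerm {q : ℝ} (hq : 0 ≤ q) (z : ℝ) (x : (ℕ+ × ℕ+) × ℕ) :
    ‖egfTerm q z x‖ = egfTerm q |z| x := by
  simp [egfTerm, abs_of_nonneg hq]

lemma summable_egfTerm {q z : ℝ} (hq : 0 ≤ q) (hz : exp |z| * q < 1) :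
    Summable (egfTerm q z) := by
  refine Summable.of_norm ?_
  simp_rw [norm_egfTerm hq]
  have hbound (p : ℕ+ × ℕ+) : ∑' t, egfTerm q |z| (p, t) ≤ (exp |z| * q) ^ ((p.1 : ℕ) * p.2) := by
    obtain ⟨m, d⟩ := p
    have hE : 1 ≤ exp |z| := one_le_exp (abs_nonneg z)
    rw [(hasSum_egfTerm q |z| (m, d)).tsum_eq]
    calc ((exp |z| * q ^ (m : ℕ)) ^ (d : ℕ) - (q ^ (m : ℕ)) ^ (d : ℕ)) / ((d : ℕ) : ℝ)
        ≤ (exp |z| * q ^ (m : ℕ)) ^ (d : ℕ) := by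
          refine (div_le_self ?_ (mod_cast d.pos)).trans (sub_le_self _ (by positivity))
          have : q ^ (m : ℕ) ≤ exp |z| * q ^ (m : ℕ) := le_mul_of_one_le_left (by positivity) hE
          exact sub_nonneg.mpr (pow_le_pow_left₀ (by positivity) this _)
      _ ≤ (exp |z| ^ (m : ℕ) * q ^ (m : ℕ)) ^ (d : ℕ) := by
          gcongr
          exact le_self_pow₀ hE m.ne_zero
      _ = (exp |z| * q) ^ ((m : ℕ) * d) := by rw [← mul_pow, pow_mul]
  have hnonneg (x : (ℕ+ × ℕ+) × ℕ) : 0 ≤ egfTerm q |z| x := norm_egfTerm hq z x ▸ norm_nonneg _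
  refine (summable_prod_of_nonneg hnonneg).mpr ⟨fun p => (hasSum_egfTerm q |z| p).summable, ?_⟩
  refine Summable.of_nonneg_of_le (fun p => tsum_nonneg fun t => hnonneg _) hbound ?_
  have hr : ‖exp |z| * q‖ < 1 := by rwa [norm_of_nonneg (by positivity)]
  simpa using summable_prod_mul_pow 0 hr

lemma hasSum_log_one_sub_sub_log_one_sub {q z : ℝ} (hq0 : 0 < q) (hq1 : q < 1)
    (hz : exp |z| * q < 1) (m : ℕ+) :
    HasSum (fun d : ℕ+ =>
        ((exp z * q ^ (m : ℕ)) ^ (d : ℕ) - (q ^ (m : ℕ)) ^ (d : ℕ)) / ((d : ℕ) : ℝ))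
      (log (1 - q ^ (m : ℕ)) - log (1 - exp z * q ^ (m : ℕ))) := by
  have hqm : q ^ (m : ℕ) ≤ q := pow_le_of_le_one hq0.le hq1.le m.ne_zero
  refine hasSum_pow_sub_pow_div_pnat ?_ ?_
  · rw [abs_of_pos (by positivity)]
    exact hqm.trans_lt hq1
  · rw [abs_of_pos (by positivity)]
    calc exp z * q ^ (m : ℕ) ≤ exp |z| * q := by gcongr; exact le_abs_self z
      _ < 1 := hz

/-- For `0 < q < 1` and real `z` with `e^{|z|} q < 1`,
`∑_{t=1}^∞ (z^t/t!) ∑_{n=1}^∞ σ_{t-1}(n) q^n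
  = ∑_{ℓ=1}^∞ (log(1 - q^ℓ) - log(1 - e^z q^ℓ))`,
i.e. the exponential generating function of the divisor generating functions `K_t(q)`
equals `log((q)_∞ / (e^z q)_∞)`. -/
theorem cumulant_egf_eq_log (q z : ℝ) (hq0 : 0 < q) (hq1 : q < 1)
    (hz : Real.exp |z| * q < 1) :
    ∑' t : ℕ, (z ^ (t + 1) / (Nat.factorial (t + 1) : ℝ)) *
        ∑' n : ℕ, (∑ d ∈ (n + 1).divisors, (d : ℝ) ^ t) * q ^ (n + 1)
    = ∑' l : ℕ, (Real.log (1 - q ^ (l + 1)) - Real.log (1 - Real.exp z * q ^ (l + 1))) := by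
  have hS := summable_egfTerm hq0.le hz
  have hq : ‖q‖ < 1 := by rwa [norm_of_nonneg hq0.le]
  calc _ = ∑' t, ∑' p, egfTerm q z (p, t) := tsum_congr fun t => by
          rw [tsum_sum_divisors_pow_mul_pow_succ t hq, ← tsum_mul_left]; rfl
    _ = ∑' p, ∑' t, egfTerm q z (p, t) := hS.tsum_comm (f := fun p t => egfTerm q z (p, t))
    _ = ∑' p : ℕ+ × ℕ+, ((exp z * q ^ (p.1 : ℕ)) ^ (p.2 : ℕ) - (q ^ (p.1 : ℕ)) ^ (p.2 : ℕ))
          / ((p.2 : ℕ) : ℝ) := tsum_congr fun p => (hasSum_egfTerm q z p).tsum_eq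
    _ = ∑' m : ℕ+, (log (1 - q ^ (m : ℕ)) - log (1 - exp z * q ^ (m : ℕ))) := by
          rw [(hS.prod.congr fun p => (hasSum_egfTerm q z p).tsum_eq).tsum_prod]
          exact tsum_congr fun m => (hasSum_log_one_sub_sub_log_one_sub hq0 hq1 hz m).tsum_eq
    _ = _ := tsum_pnat_eq_tsum_succ (f := fun l => log (1 - q ^ l) - log (1 - exp z * q ^ l))
end

section
/- Let q be a real number, and let n ≥ 1 and k ≥ 1 be integers. Then ∑_{h=1}^n (n-h)^k q^{n-h} ∏_{j=1}^{h-1} (1 - q^{n-j}) = n^k - a_{n,k}(q), where a_{n,k}(q) = ∑_{i=1}^n f_k(i) ∏_{j=i}^{n-1} (1 - q^j) and f_k(i) = ∑_{j=1}^k binom(k,j) (-1)^{j-1} i^{k-j}. -/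
/-!
With `T i = ∏_{j=i}^{n-1} (1 - q^j)`, the weight of `h` is `q^(n-h) T (n-h+1) = T (n-h+1) - T (n-h)`,
so after substituting `i = n - h` the left side is `∑_{i<n} i^k (T (i+1) - T i)`. Summation by parts
turns this into `n^k T n - ∑_{i=1}^n (i^k - (i-1)^k) T i`, and `T n = 1` while the binomial theorem
gives `f_k(i) = i^k - (i-1)^k`.
-/

open Finset

section

variable {R : Type*} [CommRing R]

theorem sum_Icc_choose_mul_neg_one_pow_mul_pow (k : ℕ) (x : R) :
    ∑ j ∈ Icc 1 k, (k.choose j : R) * (-1) ^ (j - 1) * x ^ (k - j) = x ^ k - (x - 1) ^ k := by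
  have hbinom : (x - 1) ^ k = x ^ k + ∑ j ∈ Icc 1 k, (-1) ^ j * x ^ (k - j) * k.choose j := by
    rw [← neg_add_eq_sub, add_pow, range_eq_Ico, sum_eq_sum_Ico_succ_bot k.succ_pos,
      ← Ico_add_one_right_eq_Icc]
    simp
  rw [hbinom, sub_add_cancel_left, ← sum_neg_distrib]
  refine sum_congr rfl fun j hj => ?_
  obtain ⟨i, rfl⟩ := Nat.exists_eq_add_of_le' (mem_Icc.1 hj).1
  simp only [add_tsub_cancel_right, pow_succ]
  ring

theorem sum_range_mul_sub_by_parts (g Q : ℕ → R) (m : ℕ) :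
    ∑ i ∈ range m, g i * (Q (i + 1) - Q i)
      = g m * Q m - g 0 * Q 0 - ∑ i ∈ range m, (g (i + 1) - g i) * Q (i + 1) := by
  induction m with
  | zero => simp
  | succ m ih =>
    rw [sum_range_succ, ih, sum_range_succ]
    ring

def tailProd (q : R) (n i : ℕ) : R := ∏ j ∈ Ico i n, (1 - q ^ j)

variable {q : R} {n i : ℕ}

@[simp]
theorem tailProd_self : tailProd q n n = 1 := by
  simp [tailProd]

theorem tailProd_eq_mul_tailProd_succ (h : i < n) :
    tailProd q n i = (1 - q ^ i) * tailProd q n (i + 1) :=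
  prod_eq_prod_Ico_succ_bot h _

theorem pow_mul_tailProd_succ (h : i < n) :
    q ^ i * tailProd q n (i + 1) = tailProd q n (i + 1) - tailProd q n i := by
  rw [tailProd_eq_mul_tailProd_succ h]
  ring

theorem prod_Icc_sub_one_eq_tailProd (hi : 1 ≤ i) :
    ∏ j ∈ Icc i (n - 1), (1 - q ^ j) = tailProd q n i := by
  rw [tailProd]
  congr 1
  ext j
  simp only [mem_Icc, mem_Ico]
  omega

theorem prod_Icc_one_sub_pow_sub_eq_tailProd {h : ℕ} (h1 : 1 ≤ h) (hhn : h ≤ n) :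
    ∏ j ∈ Icc 1 (h - 1), (1 - q ^ (n - j)) = tailProd q n (n - h + 1) := by
  rw [Icc_sub_one_right_eq_Ico_of_not_isMin (not_isMin_of_lt h1),
    prod_Ico_reflect (fun j => 1 - q ^ j) 1 (by omega : h ≤ n + 1), tailProd]
  congr 2
  omega

end

theorem sum_range_succ_eq_sum_Icc {M : Type*} [AddCommMonoid M] (F : ℕ → M) (n : ℕ) :
    ∑ i ∈ range n, F (i + 1) = ∑ i ∈ Icc 1 n, F i := by
  rw [range_eq_Ico, sum_Ico_add', ← Ico_add_one_right_eq_Icc]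

theorem centered_moment_eq_general (q : ℝ) (n k : ℕ) (hk : 1 ≤ k)
    (f : ℕ → ℕ → ℝ)
    (hf : ∀ l i : ℕ, f l i =
      ∑ j ∈ Finset.Icc 1 l, (l.choose j : ℝ) * (-1) ^ (j - 1) * (i : ℝ) ^ (l - j))
    (a : ℕ → ℕ → ℝ)
    (ha : ∀ m l : ℕ, a m l =
      ∑ i ∈ Finset.Icc 1 m, f l i * ∏ j ∈ Finset.Icc i (m - 1), (1 - q ^ j)) :
    ∑ h ∈ Finset.Icc 1 n, ((n - h : ℕ) : ℝ) ^ k * q ^ (n - h) *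
        ∏ j ∈ Finset.Icc 1 (h - 1), (1 - q ^ (n - j))
    = (n : ℝ) ^ k - a n k := by
  set T := tailProd q n
  have ha' : a n k = ∑ i ∈ Icc 1 n, ((i : ℝ) ^ k - ((i : ℝ) - 1) ^ k) * T i := by
    rw [ha]
    refine sum_congr rfl fun i hi => ?_
    rw [hf, sum_Icc_choose_mul_neg_one_pow_mul_pow, prod_Icc_sub_one_eq_tailProd (mem_Icc.1 hi).1]
  calc _ = ∑ h ∈ Ico 1 (n + 1), ((n - h : ℕ) : ℝ) ^ k * q ^ (n - h) * T (n - h + 1) := by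
        rw [← Ico_add_one_right_eq_Icc]
        refine sum_congr rfl fun h hh => ?_
        rw [mem_Ico] at hh
        rw [prod_Icc_one_sub_pow_sub_eq_tailProd hh.1 (by omega)]
    _ = ∑ i ∈ range n, (i : ℝ) ^ k * q ^ i * T (i + 1) := by
        rw [sum_Ico_reflect (fun i => (i : ℝ) ^ k * q ^ i * T (i + 1)) 1 le_rfl,
          Nat.sub_self, Nat.add_sub_cancel, Nat.Ico_zero_eq_range]
    _ = ∑ i ∈ range n, (i : ℝ) ^ k * (T (i + 1) - T i) := by
        refine sum_congr rfl fun i hi => ?_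
        rw [mul_assoc, pow_mul_tailProd_succ (mem_range.1 hi)]
    _ = (n : ℝ) ^ k - a n k := by
        rw [sum_range_mul_sub_by_parts (fun i => (i : ℝ) ^ k), ha',
          ← sum_range_succ_eq_sum_Icc (fun i => ((i : ℝ) ^ k - ((i : ℝ) - 1) ^ k) * T i)]
        simp [T, zero_pow (by omega : k ≠ 0)]

/-- For every real `q` and integers `n ≥ 1`, `k ≥ 1`,
`∑_{h=1}^n (n-h)^k q^{n-h} ∏_{j=1}^{h-1} (1 - q^{n-j}) = n^k - a_{n,k}(q)`, where
`a_{n,k}(q) = ∑_{i=1}^n f_k(i) ∏_{j=i}^{n-1} (1 - q^j)` and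
`f_k(i) = ∑_{j=1}^k binom(k,j) (-1)^{j-1} i^{k-j}`. -/
theorem centered_moment_eq (q : ℝ) (n k : ℕ) (hn : 1 ≤ n) (hk : 1 ≤ k)
    (f : ℕ → ℕ → ℝ)
    (hf : ∀ l i : ℕ, f l i =
      ∑ j ∈ Finset.Icc 1 l, (l.choose j : ℝ) * (-1) ^ (j - 1) * (i : ℝ) ^ (l - j))
    (a : ℕ → ℕ → ℝ)
    (ha : ∀ m l : ℕ, a m l =
      ∑ i ∈ Finset.Icc 1 m, f l i * ∏ j ∈ Finset.Icc i (m - 1), (1 - q ^ j)) :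
    ∑ h ∈ Finset.Icc 1 n, ((n - h : ℕ) : ℝ) ^ k * q ^ (n - h) *
        ∏ j ∈ Finset.Icc 1 (h - 1), (1 - q ^ (n - j))
    = (n : ℝ) ^ k - a n k :=
  centered_moment_eq_general q n k hk f hf a ha
end

section
/- Let q be a real number, and let n ≥ 2 and k ≥ 1 be integers. Then the moments e_{n,k}(q) = ∑_{h=1}^n h^k q^{n-h} ∏_{j=1}^{h-1} (1 - q^{n-j}) satisfy the recurrence e_{n,k}(q) = 1 + (1 - q^{n-1}) ∑_{j=1}^k binom(k,j) e_{n-1,j}(q). -/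
-- telescoping lemma
lemma telescope (q : ℝ) (N : ℕ) (hN : 1 ≤ N) :
    ∑ h ∈ Finset.Icc 1 N, q ^ (N - h) * ∏ j ∈ Finset.Icc 1 (h - 1), (1 - q ^ (N - j)) = 1 := by
  set P : ℕ → ℝ := fun m => ∏ j ∈ Finset.Icc 1 m, (1 - q ^ (N - j)) with hP
  have h1 : ∑ h ∈ Finset.Icc 1 N, q ^ (N - h) * P (h - 1)
      = ∑ i ∈ Finset.range N, (P i - P (i + 1)) := by
    rw [← Finset.Ico_add_one_right_eq_Icc, Finset.sum_Ico_eq_sum_range]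
    apply Finset.sum_congr rfl
    intro i hi
    have h2 : P (i + 1) = P i * (1 - q ^ (N - (i + 1))) := by
      rw [hP]; exact Finset.prod_Icc_succ_top (by omega) _
    have h3 : 1 + i - 1 = i := by omega
    have h4 : N - (1 + i) = N - (i + 1) := by omega
    rw [h3, h4, h2]; ring
  rw [h1, Finset.sum_range_sub']
  have hP0 : P 0 = 1 := by simp [hP]
  have hPN : P N = 0 := by
    rw [hP]
    refine Finset.prod_eq_zero (Finset.mem_Icc.mpr ⟨hN, le_refl N⟩) ?_
    simp
  rw [hP0, hPN]; ring

lemma step1 (q : ℝ) (N k : ℕ) (hN : 1 ≤ N) :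
    momentE q (N + 1) k = q ^ N + (1 - q ^ N) *
      ∑ m ∈ Finset.Icc 1 N, ((m : ℝ) + 1) ^ k * q ^ (N - m) *
        ∏ j ∈ Finset.Icc 1 (m - 1), (1 - q ^ (N - j)) := by
  unfold momentE
  rw [← Finset.Ico_add_one_right_eq_Icc, Finset.sum_Ico_eq_sum_range]
  have hr : N + 1 + 1 - 1 = N + 1 := by omega
  rw [hr, Finset.sum_range_succ']
  have h0 : ((1:ℕ) : ℝ) ^ k * q ^ (N + 1 - 1) *
      ∏ j ∈ Finset.Icc 1 (1 - 1), (1 - q ^ (N + 1 - j)) = q ^ N := by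
    simp
  rw [h0]
  have h1 : ∀ i ∈ Finset.range N,
      ((1 + (i + 1) : ℕ) : ℝ) ^ k * q ^ (N + 1 - (1 + (i + 1))) *
        ∏ j ∈ Finset.Icc 1 (1 + (i + 1) - 1), (1 - q ^ (N + 1 - j))
      = (1 - q ^ N) * ((((i+1) : ℕ) : ℝ) + 1) ^ k * q ^ (N - (i + 1)) *
        ∏ j ∈ Finset.Icc 1 ((i + 1) - 1), (1 - q ^ (N - j)) := by
    intro i hi
    have e1 : 1 + (i + 1) - 1 = i + 1 := by omega
    have e2 : N + 1 - (1 + (i + 1)) = N - (i + 1) := by omega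
    rw [e1, e2]
    have e3 : ∏ j ∈ Finset.Icc 1 (i + 1), (1 - q ^ (N + 1 - j))
        = (1 - q ^ N) * ∏ j ∈ Finset.Icc 1 i, (1 - q ^ (N - j)) := by
      rw [← Finset.Ico_add_one_right_eq_Icc, Finset.prod_Ico_eq_prod_range,
          ← Finset.Ico_add_one_right_eq_Icc, Finset.prod_Ico_eq_prod_range]
      have hr2 : i + 1 + 1 - 1 = i + 1 := by omega
      have hr3 : i + 1 - 1 = i := by omega
      rw [hr2, hr3, Finset.prod_range_succ', mul_comm]
      congr 1
      apply Finset.prod_congr rfl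
      intro l hl
      congr 2
      omega
    rw [e3]
    have e4 : ((1 + (i + 1) : ℕ) : ℝ) = (((i+1) : ℕ) : ℝ) + 1 := by push_cast; ring
    rw [e4]
    have e5 : (i + 1) - 1 = i := by omega
    rw [e5]
    ring
  rw [Finset.sum_congr rfl h1]
  rw [← Finset.Ico_add_one_right_eq_Icc, Finset.sum_Ico_eq_sum_range]
  have hr4 : N + 1 - 1 = N := by omega
  rw [hr4, Finset.mul_sum]
  rw [add_comm]
  congr 1
  apply Finset.sum_congr rfl
  intro i hi
  ring

lemma step2 (q : ℝ) (N k : ℕ) :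
    ∑ m ∈ Finset.Icc 1 N, ((m : ℝ) + 1) ^ k * q ^ (N - m) *
        ∏ j ∈ Finset.Icc 1 (m - 1), (1 - q ^ (N - j))
    = ∑ j ∈ Finset.range (k + 1), (k.choose j : ℝ) * momentE q N j := by
  have expand : ∀ x : ℝ, (x + 1) ^ k
      = ∑ j ∈ Finset.range (k + 1), x ^ j * (k.choose j : ℝ) := by
    intro x
    rw [add_pow]
    simp
  have h1 : ∑ m ∈ Finset.Icc 1 N, ((m : ℝ) + 1) ^ k * q ^ (N - m) *
      ∏ j ∈ Finset.Icc 1 (m - 1), (1 - q ^ (N - j))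
      = ∑ m ∈ Finset.Icc 1 N, ∑ j ∈ Finset.range (k + 1),
        (k.choose j : ℝ) * ((m : ℝ) ^ j * q ^ (N - m) *
          ∏ l ∈ Finset.Icc 1 (m - 1), (1 - q ^ (N - l))) := by
    apply Finset.sum_congr rfl
    intro m hm
    rw [expand, Finset.sum_mul, Finset.sum_mul]
    apply Finset.sum_congr rfl
    intro j hj
    ring
  rw [h1, Finset.sum_comm]
  apply Finset.sum_congr rfl
  intro j hj
  rw [← Finset.mul_sum]
  rfl

/-- For every real `q` and integers `n ≥ 2`, `k ≥ 1`, the moments satisfy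
`e_{n,k}(q) = 1 + (1 - q^{n-1}) ∑_{j=1}^k binom(k,j) e_{n-1,j}(q)`. -/
theorem moment_recurrence (q : ℝ) (n k : ℕ) (hn : 2 ≤ n) (hk : 1 ≤ k) :
    momentE q n k = 1 + (1 - q ^ (n - 1)) *
      ∑ j ∈ Finset.Icc 1 k, (k.choose j : ℝ) * momentE q (n - 1) j := by
  obtain ⟨N, rfl⟩ : ∃ N, n = N + 1 := ⟨n - 1, by omega⟩
  have hN : 1 ≤ N := by omega
  have hn1 : N + 1 - 1 = N := by omega
  rw [hn1, step1 q N k hN, step2 q N k]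
  have hsplit : ∑ j ∈ Finset.range (k + 1), (k.choose j : ℝ) * momentE q N j
      = 1 + ∑ j ∈ Finset.Icc 1 k, (k.choose j : ℝ) * momentE q N j := by
    rw [Finset.sum_range_succ']
    have h0 : (k.choose 0 : ℝ) * momentE q N 0 = 1 := by
      have hm0 : momentE q N 0 = 1 := by
        unfold momentE
        have heq : ∑ h ∈ Finset.Icc 1 N, (h : ℝ) ^ 0 * q ^ (N - h) *
            ∏ j ∈ Finset.Icc 1 (h - 1), (1 - q ^ (N - j))
            = ∑ h ∈ Finset.Icc 1 N, q ^ (N - h) *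
            ∏ j ∈ Finset.Icc 1 (h - 1), (1 - q ^ (N - j)) := by
          apply Finset.sum_congr rfl
          intro h hh
          ring
        rw [heq, telescope q N hN]
      rw [hm0]
      simp
    rw [h0, ← Finset.Ico_add_one_right_eq_Icc, Finset.sum_Ico_eq_sum_range]
    have : k + 1 - 1 = k := by omega
    rw [this]
    rw [add_comm]
    congr 1
    apply Finset.sum_congr rfl
    intro i hi
    rw [Nat.add_comm 1 i]
  rw [hsplit]
  ring
end

section
/- Let q be a real number with 0 < q < 1, let f(n) = ∑_{k=0}^d c_k n^k be a polynomial in n with rational coefficients c_k, and let a_n(q) be defined by the recurrence a_0(q) = 1 and a_n(q) = f(n) + (1 - q^{n-1}) a_{n-1}(q) for n ≥ 1. Then ∑_{n=1}^∞ a_n(q) q^n = ∑_{n=1}^∞ (∑_{i=1}^n f(i)) q^n ∏_{j=n+1}^∞ (1 - q^j). -/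
/-!
Write `S n = ∑_{i=1}^n f i` and `Q m = (q^m; q)_∞`. Telescoping the recurrence gives
`∑_{n=1}^N a_n q^n + a_{N+1} = S_{N+1}`, and together with `Q m = (1 - q^m) Q (m+1)` this turns
the `N`-th partial sum of the right-hand side into exactly `Q (N+1)` times the `N`-th partial sum
of the left-hand side (an Abel summation). Both series converge absolutely because `a_n` and
`S_n` grow polynomially, and `Q m → 1`, so the two sums agree.
-/

open Filter Finset Real Topology

section Recurrence

variable {R : Type*} [CommRing R] {q : R} {f a : ℕ → R}

theorem sum_range_mul_pow_add_eq_sum_Icc (ha0 : a 0 = 1)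
    (ha : ∀ n, a (n + 1) = f (n + 1) + (1 - q ^ n) * a n) (N : ℕ) :
    ∑ n ∈ range N, a (n + 1) * q ^ (n + 1) + a (N + 1) = ∑ i ∈ Icc 1 (N + 1), f i := by
  induction N with
  | zero => simp [ha 0, ha0]
  | succ N ih =>
    rw [sum_range_succ, sum_Icc_succ_top (by omega), ← ih, ha (N + 1)]
    ring

theorem sum_range_sum_Icc_mul_pow_mul_eq (ha0 : a 0 = 1)
    (ha : ∀ n, a (n + 1) = f (n + 1) + (1 - q ^ n) * a n) {Q : ℕ → R}
    (hQ : ∀ m, Q m = (1 - q ^ m) * Q (m + 1)) (N : ℕ) :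
    ∑ n ∈ range N, (∑ i ∈ Icc 1 (n + 1), f i) * q ^ (n + 1) * Q (n + 2)
      = Q (N + 1) * ∑ n ∈ range N, a (n + 1) * q ^ (n + 1) := by
  induction N with
  | zero => simp
  | succ N ih =>
    rw [sum_range_succ, sum_range_succ, ih, hQ (N + 1),
      ← sum_range_mul_pow_add_eq_sum_Icc ha0 ha N]
    ring

end Recurrence

/-- The infinite `q`-Pochhammer symbol `(q^m; q)_∞`. -/
noncomputable def qPochhammerInf (q : ℝ) (m : ℕ) : ℝ := ∏' j : ℕ, (1 - q ^ (m + j))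

section QPochhammer

variable {q : ℝ} (hq : |q| < 1)
include hq

theorem summable_pow_add (m : ℕ) : Summable fun j : ℕ => q ^ (m + j) := by
  simpa only [pow_add] using (summable_geometric_of_abs_lt_one hq).mul_left (q ^ m)

theorem one_sub_pow_pos {n : ℕ} (hn : n ≠ 0) : 0 < 1 - q ^ n := by
  have : |q ^ n| < 1 := by rw [abs_pow]; exact pow_lt_one₀ (abs_nonneg q) hq hn
  linarith [le_abs_self (q ^ n)]

theorem qPochhammerInf_eq_mul_succ (m : ℕ) :
    qPochhammerInf q m = (1 - q ^ m) * qPochhammerInf q (m + 1) := by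
  have hmul : Multipliable fun j : ℕ => 1 - q ^ (m + 1 + j) := by
    simpa only [sub_eq_add_neg] using
      Real.multipliable_one_add_of_summable (summable_pow_add hq (m + 1)).neg
  rw [qPochhammerInf, tprod_eq_zero_mul' (f := fun j => 1 - q ^ (m + j)), add_zero]
  · simp only [qPochhammerInf, add_assoc, add_comm 1]
  · simpa only [add_assoc, add_comm 1] using hmul

theorem tendsto_qPochhammerInf : Tendsto (qPochhammerInf q) atTop (𝓝 1) := by
  have hlog : Summable fun k : ℕ => log (1 - q ^ (1 + k)) := by
    simpa only [sub_eq_add_neg] using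
      Real.summable_log_one_add_of_summable (summable_pow_add hq 1).neg
  have hexp : ∀ m : ℕ, qPochhammerInf q (m + 1) = exp (∑' k, log (1 - q ^ (1 + (k + m)))) := by
    intro m
    rw [Real.rexp_tsum_eq_tprod (fun k => one_sub_pow_pos hq (by omega))
      ((summable_nat_add_iff m).2 hlog), qPochhammerInf]
    exact tprod_congr fun k => by rw [show m + 1 + k = 1 + (k + m) by omega]
  -- the tails of a convergent series of logarithms tend to `0`
  have := (continuous_exp.tendsto 0).comp (tendsto_sum_nat_add fun k => log (1 - q ^ (1 + k)))
  rw [exp_zero] at this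
  rwa [← tendsto_add_atTop_iff_nat 1, funext hexp]

end QPochhammer

theorem abs_sum_range_mul_pow_le (c : ℕ → ℝ) (d : ℕ) {x : ℝ} (hx : 1 ≤ x) :
    |∑ k ∈ range (d + 1), c k * x ^ k| ≤ (∑ k ∈ range (d + 1), |c k|) * x ^ d := by
  rw [sum_mul]
  refine (abs_sum_le_sum_abs _ _).trans (sum_le_sum fun k hk => ?_)
  rw [abs_mul, abs_pow, abs_of_nonneg (zero_le_one.trans hx)]
  gcongr
  exact mem_range_succ_iff.1 hk

theorem sum_Icc_abs_le {f : ℕ → ℝ} {C : ℝ} {d : ℕ} (hf : ∀ i, 1 ≤ i → |f i| ≤ C * (i : ℝ) ^ d)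
    (n : ℕ) : ∑ i ∈ Icc 1 n, |f i| ≤ C * (n : ℝ) ^ (d + 1) := by
  obtain rfl | - := n.eq_zero_or_pos
  · simp
  have hC : 0 ≤ C := by simpa using (abs_nonneg _).trans (hf 1 le_rfl)
  calc ∑ i ∈ Icc 1 n, |f i| ≤ ∑ _i ∈ Icc 1 n, C * (n : ℝ) ^ d :=
        sum_le_sum fun i hi => (hf i (mem_Icc.1 hi).1).trans <| by
          gcongr; exact_mod_cast (mem_Icc.1 hi).2
    _ = C * (n : ℝ) ^ (d + 1) := by
        rw [sum_const, Nat.card_Icc, nsmul_eq_mul, pow_succ]; push_cast; ring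

theorem abs_le_one_add_sum_Icc_abs {q : ℝ} (hq0 : 0 ≤ q) (hq1 : q ≤ 1) {f a : ℕ → ℝ}
    (ha0 : a 0 = 1) (ha : ∀ n, a (n + 1) = f (n + 1) + (1 - q ^ n) * a n) (n : ℕ) :
    |a n| ≤ 1 + ∑ i ∈ Icc 1 n, |f i| := by
  induction n with
  | zero => simp [ha0]
  | succ n ih =>
    have hq : 0 ≤ 1 - q ^ n ∧ 1 - q ^ n ≤ 1 := by
      constructor <;> linarith [pow_le_one₀ (n := n) hq0 hq1, pow_nonneg hq0 n]
    calc |a (n + 1)| ≤ |f (n + 1)| + |(1 - q ^ n) * a n| := ha n ▸ abs_add_le _ _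
      _ = |f (n + 1)| + (1 - q ^ n) * |a n| := by rw [abs_mul, abs_of_nonneg hq.1]
      _ ≤ |f (n + 1)| + |a n| := by gcongr; exact mul_le_of_le_one_left (abs_nonneg _) hq.2
      _ ≤ 1 + ∑ i ∈ Icc 1 (n + 1), |f i| := by
          rw [sum_Icc_succ_top (by omega)]; linarith

theorem summable_mul_pow_succ {q : ℝ} (hq : |q| < 1) {u : ℕ → ℝ} {C : ℝ} {k : ℕ}
    (hu : ∀ n, 1 ≤ n → |u n| ≤ C * (n : ℝ) ^ k) :
    Summable fun n => u (n + 1) * q ^ (n + 1) := by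
  have hg : Summable fun n : ℕ => C * ((n : ℝ) ^ k * |q| ^ n) :=
    (summable_pow_mul_geometric_of_norm_lt_one k (by simpa using hq)).mul_left C
  refine Summable.of_norm_bounded ((summable_nat_add_iff 1).2 hg) fun n => ?_
  rw [norm_mul, norm_pow, Real.norm_eq_abs, Real.norm_eq_abs, ← mul_assoc]
  exact mul_le_mul_of_nonneg_right (hu (n + 1) (by omega)) (by positivity)

theorem tsum_eq_tsum_of_sum_range_eq_mul {R : Type*} [Ring R] [TopologicalSpace R]
    [IsTopologicalRing R] [T2Space R] {F G Q : ℕ → R} (hF : Summable F) (hG : Summable G)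
    (hQ : Tendsto Q atTop (𝓝 1)) (h : ∀ N, ∑ n ∈ range N, G n = Q N * ∑ n ∈ range N, F n) :
    ∑' n, G n = ∑' n, F n := by
  refine tendsto_nhds_unique hG.hasSum.tendsto_sum_nat ?_
  simpa only [h, one_mul] using hQ.mul hF.hasSum.tendsto_sum_nat

/-- Let `0 < q < 1`, let `f(n) = ∑_{k=0}^d c_k n^k` be a polynomial with rational
coefficients, and let `a_n(q)` satisfy `a_0(q) = 1`,
`a_n(q) = f(n) + (1 - q^{n-1}) a_{n-1}(q)` for `n ≥ 1`. Then
`∑_{n=1}^∞ a_n(q) q^n = ∑_{n=1}^∞ (∑_{i=1}^n f(i)) q^n (q^{n+1})_∞`. -/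
theorem generating_function_value (q : ℝ) (hq0 : 0 < q) (hq1 : q < 1)
    (d : ℕ) (c : ℕ → ℚ) (f : ℕ → ℝ)
    (hf : ∀ n : ℕ, f n = ∑ k ∈ Finset.range (d + 1), (c k : ℝ) * (n : ℝ) ^ k)
    (a : ℕ → ℝ) (ha0 : a 0 = 1)
    (ha : ∀ n : ℕ, a (n + 1) = f (n + 1) + (1 - q ^ n) * a n) :
    ∑' n : ℕ, a (n + 1) * q ^ (n + 1)
    = ∑' n : ℕ, (∑ i ∈ Finset.Icc 1 (n + 1), f i) * q ^ (n + 1) *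
        ∏' j : ℕ, (1 - q ^ (n + 2 + j)) := by
  have hq : |q| < 1 := by rwa [abs_of_pos hq0]
  set C : ℝ := ∑ k ∈ range (d + 1), |(c k : ℝ)|
  have hfC : ∀ i, 1 ≤ i → |f i| ≤ C * (i : ℝ) ^ d := fun i hi =>
    hf i ▸ abs_sum_range_mul_pow_le _ d (by exact_mod_cast hi)
  have hQ := tendsto_qPochhammerInf hq
  obtain ⟨B, hB⟩ := isBounded_iff_forall_norm_le.1 (Metric.isBounded_range_of_tendsto _ hQ)
  replace hB : ∀ m, |qPochhammerInf q m| ≤ B := fun m => hB _ ⟨m, rfl⟩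
  have hL : Summable fun n => a (n + 1) * q ^ (n + 1) := by
    refine summable_mul_pow_succ hq (C := 1 + C) (k := d + 1) fun n hn => ?_
    calc |a n| ≤ 1 + ∑ i ∈ Icc 1 n, |f i| := abs_le_one_add_sum_Icc_abs hq0.le hq1.le ha0 ha n
      _ ≤ (n : ℝ) ^ (d + 1) + C * (n : ℝ) ^ (d + 1) :=
          add_le_add (one_le_pow₀ (by exact_mod_cast hn)) (sum_Icc_abs_le hfC n)
      _ = (1 + C) * (n : ℝ) ^ (d + 1) := by ring
  have hR : Summable fun n =>
      (∑ i ∈ Icc 1 (n + 1), f i) * q ^ (n + 1) * qPochhammerInf q (n + 2) := by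
    refine (summable_mul_pow_succ hq (C := B * C) (k := d + 1)
      (u := fun n => qPochhammerInf q (n + 1) * ∑ i ∈ Icc 1 n, f i) fun n _ => ?_).congr
      fun n => by ring
    rw [abs_mul, mul_assoc]
    exact mul_le_mul (hB _) ((abs_sum_le_sum_abs _ _).trans (sum_Icc_abs_le hfC n))
      (abs_nonneg _) ((abs_nonneg _).trans (hB 0))
  exact (tsum_eq_tsum_of_sum_range_eq_mul hL hR (hQ.comp (tendsto_add_atTop_nat 1))
    (sum_range_sum_Icc_mul_pow_mul_eq ha0 ha (qPochhammerInf_eq_mul_succ hq))).symm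
end

section
/- For every integer k ≥ 0 and every complex number x with |x| < 1, one has ∑_{n=1}^∞ n^k x^n = x A_k(x) / (1 - x)^{k+1}. -/
/-!
Write `S_k(x) = ∑_{n ≥ 1} n^k x^n`. Expanding `n^{k+1} = ((n+1) - 1)^{k+1}` binomially and
shifting the summation index gives `(1 - x) S_{k+1} = ∑_{j ≤ k} binom(k+1,j) (-1)^{k-j} S_j`.
Multiplied by `(1 - x)^{k+1}`, this says that `(1 - x)^{k+1} S_k` satisfies the recurrence
defining `x A_k(x)`, and both start from `x` by the geometric series.
-/

/-- The Eulerian polynomials, defined recursively by `A_0(t) = 1` and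
`A_k(t) = ∑_{j=0}^{k-1} binom(k,j) A_j(t) (t-1)^{k-1-j}` for `k ≥ 1`. -/
noncomputable def eulerian : ℕ → ℂ → ℂ
  | 0, _ => 1
  | (k+1), t => ∑ j ∈ (Finset.range (k+1)).attach,
      ((k+1).choose j.1 : ℂ) * eulerian j.1 t * (t - 1) ^ (k - j.1)
  decreasing_by exact Finset.mem_range.mp j.2

open Finset

theorem add_one_pow_succ_sub_pow_succ {R : Type*} [CommRing R] (a : R) (k : ℕ) :
    (a + 1) ^ (k + 1) - a ^ (k + 1) =
      ∑ j ∈ range (k + 1), ((k + 1).choose j : R) * (-1) ^ (k - j) * (a + 1) ^ j := by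
  obtain ⟨b, rfl⟩ : ∃ b, a = b - 1 := ⟨a + 1, by ring⟩
  rw [sub_add_cancel, sub_eq_add_neg b, add_pow, sum_range_succ, Nat.sub_self, Nat.choose_self,
    pow_zero, mul_one, Nat.cast_one, mul_one, sub_add_cancel_right, ← sum_neg_distrib]
  refine sum_congr rfl fun j hj => ?_
  rw [Nat.succ_sub (mem_range_succ_iff.mp hj), pow_succ]
  ring

section PolylogNeg

variable {R : Type*} [NormedCommRing R] [HasSummableGeomSeries R] {x : R}

/-- The polylogarithm `Li_{-k}(x) = ∑_{n ≥ 1} n^k x^n` of negative order. -/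
noncomputable def polylogNeg (k : ℕ) (x : R) : R :=
  ∑' n : ℕ, ((n : R) + 1) ^ k * x ^ (n + 1)

theorem summable_succ_pow_mul_pow_succ (k : ℕ) (hx : ‖x‖ < 1) :
    Summable fun n : ℕ => ((n : R) + 1) ^ k * x ^ (n + 1) :=
  ((summable_nat_add_iff (f := fun n : ℕ => (n : R) ^ k * x ^ n) 1).2
    (summable_pow_mul_geometric_of_norm_lt_one k hx)).congr fun n => by rw [Nat.cast_succ]

theorem one_sub_mul_polylogNeg_zero (hx : ‖x‖ < 1) : (1 - x) * polylogNeg 0 x = x := by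
  simp only [polylogNeg, pow_zero, one_mul, pow_succ]
  rw [(summable_geometric_of_norm_lt_one hx).tsum_mul_right, ← mul_assoc,
    mul_neg_geom_series x hx, one_mul]

theorem one_sub_mul_polylogNeg_succ (k : ℕ) (hx : ‖x‖ < 1) :
    (1 - x) * polylogNeg (k + 1) x =
      ∑ j ∈ range (k + 1), ((k + 1).choose j : R) * (-1) ^ (k - j) * polylogNeg j x := by
  have hsummable (j : ℕ) := summable_succ_pow_mul_pow_succ j hx
  have hsummable_shift : Summable fun n : ℕ => (n : R) ^ (k + 1) * x ^ (n + 1) :=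
    ((summable_pow_mul_geometric_of_norm_lt_one (k + 1) hx).mul_left x).congr fun n => by ring
  have hshift : ∑' n : ℕ, (n : R) ^ (k + 1) * x ^ (n + 1) = x * polylogNeg (k + 1) x := by
    rw [hsummable_shift.tsum_eq_zero_add, polylogNeg, ← (hsummable (k + 1)).tsum_mul_left,
      Nat.cast_zero, zero_pow k.succ_ne_zero, zero_mul, zero_add]
    exact tsum_congr fun n => by push_cast; ring
  calc (1 - x) * polylogNeg (k + 1) x = polylogNeg (k + 1) x - x * polylogNeg (k + 1) x := by ring
    _ = ∑' n : ℕ, (((n : R) + 1) ^ (k + 1) - (n : R) ^ (k + 1)) * x ^ (n + 1) := by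
      rw [← hshift, polylogNeg, ← (hsummable (k + 1)).tsum_sub hsummable_shift]
      exact tsum_congr fun n => (sub_mul _ _ _).symm
    _ = ∑' n : ℕ, ∑ j ∈ range (k + 1),
          ((k + 1).choose j : R) * (-1) ^ (k - j) * (((n : R) + 1) ^ j * x ^ (n + 1)) := by
      refine tsum_congr fun n => ?_
      rw [add_one_pow_succ_sub_pow_succ, sum_mul]
      exact sum_congr rfl fun j _ => mul_assoc _ _ _
    _ = _ := by
      rw [Summable.tsum_finsetSum fun j _ => (hsummable j).mul_left _]
      exact sum_congr rfl fun j _ => (hsummable j).tsum_mul_left _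

theorem one_sub_pow_mul_polylogNeg_succ (k : ℕ) (hx : ‖x‖ < 1) :
    (1 - x) ^ (k + 2) * polylogNeg (k + 1) x =
      ∑ j ∈ range (k + 1),
        ((k + 1).choose j : R) * (x - 1) ^ (k - j) * ((1 - x) ^ (j + 1) * polylogNeg j x) := by
  rw [pow_succ, mul_assoc, one_sub_mul_polylogNeg_succ k hx, mul_sum]
  refine sum_congr rfl fun j hj => ?_
  obtain ⟨i, rfl⟩ := Nat.exists_eq_add_of_le (mem_range_succ_iff.mp hj)
  rw [Nat.add_sub_cancel_left, show x - 1 = -(1 - x) by ring, neg_pow (1 - x)]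
  ring

end PolylogNeg

theorem eulerian_succ (k : ℕ) (t : ℂ) :
    eulerian (k + 1) t =
      ∑ j ∈ range (k + 1), ((k + 1).choose j : ℂ) * eulerian j t * (t - 1) ^ (k - j) := by
  rw [eulerian, sum_attach (range (k + 1))
    fun j => ((k + 1).choose j : ℂ) * eulerian j t * (t - 1) ^ (k - j)]

theorem one_sub_pow_mul_polylogNeg (k : ℕ) {x : ℂ} (hx : ‖x‖ < 1) :
    (1 - x) ^ (k + 1) * polylogNeg k x = x * eulerian k x := by
  induction k using Nat.strong_induction_on with
  | _ k ih =>
    cases k with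
    | zero => simpa [eulerian] using one_sub_mul_polylogNeg_zero hx
    | succ k =>
      rw [one_sub_pow_mul_polylogNeg_succ k hx, eulerian_succ, mul_sum]
      refine sum_congr rfl fun j hj => ?_
      rw [ih j (mem_range.mp hj)]
      ring

/-- For every integer `k ≥ 0` and complex `x` with `|x| < 1`,
`∑_{n=1}^∞ n^k x^n = x A_k(x) / (1-x)^{k+1}`. -/
theorem eulerian_generating_function (k : ℕ) (x : ℂ) (hx : ‖x‖ < 1) :
    ∑' n : ℕ, ((n : ℂ) + 1) ^ k * x ^ (n + 1)
    = x * eulerian k x / (1 - x) ^ (k + 1) := by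
  have hx1 : 1 - x ≠ 0 := by
    intro h
    simp [← eq_of_sub_eq_zero h] at hx
  rw [eq_div_iff (pow_ne_zero _ hx1), mul_comm]
  exact one_sub_pow_mul_polylogNeg k hx
end
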